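/- arXiv:2402.07168 — 6 statements merged into one kernel-verified Lean document; each statement's English description precedes it below -/
import Mathlib

section
/- Let (Γ_n)_{n≥1} be a sequence of graphs where Γ_n is a connected simple graph on n vertices, and suppose that for every n and every nonempty proper subset S of the vertices of Γ_n such that the induced subgraph Γ_n|_S is connected, the induced subgraph Γ_n|_S is isomorphic to Γ_{|S|} and the contraction Γ_n/S is isomorphic to Γ_{n-|S|}. Then either Γ_n is isomorphic to the path graph P_n for every n, or Γ_n is isomorphic to the complete graph K_n for every n. -/
/-!
Which family occurs is decided by `Γ 3`, a connected graph on three vertices, hence either the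
triangle or the path `P₃`. An induced path `a - b - c` of `Γ n` spans a connected subgraph, which
is therefore isomorphic to `Γ 3`. If `Γ 3` is the triangle, `a` and `c` are always adjacent, so
the connected graph `Γ n` is complete. Otherwise every `Γ n` is triangle-free, and `Γ n ≅ Pₙ`
follows by induction from the single-vertex contractions `Γ n / {v} ≅ Pₙ₋₁`. Contracting `v`
makes its neighbours pairwise adjacent, so all degrees are at most two. If no vertex were a leaf,
triangle-freeness would leave `Γ n / {v}` without a leaf, but a path has one. Contracting a leaf
`v` just deletes it; its neighbour has become an endpoint of `Pₙ₋₁`, and attaching `v` there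
gives `Pₙ`.
-/

open SimpleGraph

/-- The contraction `Γ/S`: the simple graph on the vertex set `V ∖ S` in which two
distinct vertices `i, j` are adjacent iff they are joined by a walk in the induced
subgraph `Γ|_{S ∪ {i, j}}`. -/
def SimpleGraph.contractSet {V : Type*} (G : SimpleGraph V) (S : Set V) :
    SimpleGraph {v : V // v ∉ S} :=
  SimpleGraph.fromRel fun i j =>
    (G.induce (S ∪ {i.1, j.1})).Reachable ⟨i.1, by simp⟩ ⟨j.1, by simp⟩

namespace SimpleGraph

variable {V : Type*} {G : SimpleGraph V}

lemma adj_or_adj_adj_of_reachable_induce {v i j : V} (hij : i ≠ j)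
    (h : (G.induce ({v} ∪ {i, j})).Reachable ⟨i, by simp⟩ ⟨j, by simp⟩) :
    G.Adj i j ∨ G.Adj i v ∧ G.Adj v j := by
  obtain ⟨p⟩ := h
  have hp : ¬p.Nil := p.not_nil_of_ne fun h => hij (congrArg Subtype.val h)
  have hfirst : G.Adj i p.snd.1 := p.adj_snd hp
  have hlast : G.Adj p.penultimate.1 j := p.adj_penultimate hp
  have hsnd := p.snd.2
  have hpen := p.penultimate.2
  generalize p.snd.1 = x at hfirst hsnd
  generalize p.penultimate.1 = y at hlast hpen
  simp only [Set.singleton_union, Set.mem_insert_iff, Set.mem_singleton_iff] at hsnd hpen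
  rcases hsnd with h1 | h1 | h1 <;> rw [h1] at hfirst
  · rcases hpen with h2 | h2 | h2 <;> rw [h2] at hlast
    · exact Or.inr ⟨hfirst, hlast⟩
    · exact Or.inl hlast
    · exact (hlast.ne rfl).elim
  · exact (hfirst.ne rfl).elim
  · exact Or.inl hfirst

lemma contractSet_singleton_adj {v : V} {i j : {x // x ∉ ({v} : Set V)}} :
    (G.contractSet {v}).Adj i j ↔ i ≠ j ∧ (G.Adj i j ∨ G.Adj i v ∧ G.Adj v j) := by
  have hij : i ≠ j ↔ i.1 ≠ j.1 := Subtype.ext_iff.not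
  rw [contractSet, fromRel_adj, hij]
  refine and_congr_right fun hne => ⟨?_, ?_⟩
  · rintro (h | h)
    · exact adj_or_adj_adj_of_reachable_induce hne h
    · rcases adj_or_adj_adj_of_reachable_induce hne.symm h with h | ⟨h₁, h₂⟩
      · exact Or.inl h.symm
      · exact Or.inr ⟨h₂.symm, h₁.symm⟩
  · rintro (h | ⟨h₁, h₂⟩)
    · exact Or.inl (Adj.reachable (G := G.induce _) h)
    · have h₁' : (G.induce ({v} ∪ {i.1, j.1})).Adj ⟨i, by simp⟩ ⟨v, by simp⟩ := h₁
      have h₂' : (G.induce ({v} ∪ {i.1, j.1})).Adj ⟨v, by simp⟩ ⟨j, by simp⟩ := h₂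
      exact Or.inl (h₁'.reachable.trans h₂'.reachable)

lemma contractSet_singleton_adj_iff_of_neighborSet_eq {v a : V} (hv : G.neighborSet v = {a})
    {i j : {x // x ∉ ({v} : Set V)}} : (G.contractSet {v}).Adj i j ↔ G.Adj i j := by
  rw [contractSet_singleton_adj]
  refine ⟨?_, fun h => ⟨fun hij => h.ne (congrArg Subtype.val hij), Or.inl h⟩⟩
  rintro ⟨hij, h | ⟨hi, hj⟩⟩
  · exact h
  · have hi : i.1 ∈ G.neighborSet v := hi.symm
    have hj : j.1 ∈ G.neighborSet v := hj
    rw [hv] at hi hj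
    exact (hij (Subtype.ext (hi.trans hj.symm))).elim

lemma neighborSet_diff_subsingleton_of_cliqueFree_contractSet {v u : V}
    (h : (G.contractSet {v}).CliqueFree 3) (hu : G.Adj v u) :
    (G.neighborSet v \ {u}).Subsingleton := by
  classical
  rintro x ⟨hx, hxu⟩ y ⟨hy, hyu⟩
  by_contra hxy
  have hadj : ∀ w w' (hw : G.Adj v w) (hw' : G.Adj v w'), w ≠ w' →
      (G.contractSet {v}).Adj ⟨w, hw.ne'⟩ ⟨w', hw'.ne'⟩ := fun w w' hw hw' hne =>
    contractSet_singleton_adj.mpr ⟨fun h => hne (congrArg Subtype.val h), Or.inr ⟨hw.symm, hw'⟩⟩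
  exact h {(⟨u, hu.ne'⟩ : {x // x ∉ ({v} : Set V)}), ⟨x, hx.ne'⟩, ⟨y, hy.ne'⟩}
    (is3Clique_triple_iff.mpr
      ⟨hadj _ _ hu hx (Ne.symm hxu), hadj _ _ hu hy (Ne.symm hyu), hadj _ _ hx hy hxy⟩)

lemma contractSet_singleton_neighborSet_nontrivial (hG : G.CliqueFree 3)
    (h : ∀ w, (G.neighborSet w).Nontrivial) {v : V} (w : {x // x ∉ ({v} : Set V)}) :
    ((G.contractSet {v}).neighborSet w).Nontrivial := by
  classical
  by_cases hvw : G.Adj v w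
  · obtain ⟨b, hb, hbw⟩ := (h v).exists_ne w.1
    obtain ⟨y, hy, hyv⟩ := (h w).exists_ne v
    have hb : G.Adj v b := hb
    have hy : G.Adj w y := hy
    refine ⟨⟨y, hyv⟩, ?_, ⟨b, hb.ne'⟩, ?_, fun hyb => ?_⟩
    · exact contractSet_singleton_adj.mpr ⟨fun h => hy.ne (congrArg Subtype.val h), Or.inl hy⟩
    · exact contractSet_singleton_adj.mpr
        ⟨fun h => hbw (congrArg Subtype.val h).symm, Or.inr ⟨hvw.symm, hb⟩⟩
    · have hyb : y = b := congrArg Subtype.val hyb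
      subst hyb
      exact hG {v, w.1, y} (is3Clique_triple_iff.mpr ⟨hvw, hb, hy⟩)
  · obtain ⟨x, hx, y, hy, hxy⟩ := h w
    have hx : G.Adj w x := hx
    have hy : G.Adj w y := hy
    have hxv : x ≠ v := by rintro rfl; exact hvw hx.symm
    have hyv : y ≠ v := by rintro rfl; exact hvw hy.symm
    refine ⟨⟨x, hxv⟩, ?_, ⟨y, hyv⟩, ?_, fun h => hxy (congrArg Subtype.val h)⟩
    · exact contractSet_singleton_adj.mpr ⟨fun h => hx.ne (congrArg Subtype.val h), Or.inl hx⟩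
    · exact contractSet_singleton_adj.mpr ⟨fun h => hy.ne (congrArg Subtype.val h), Or.inl hy⟩

lemma contractSet_singleton_neighborSet_subsingleton {v a : V} (hv : G.neighborSet v = {a})
    (ha : a ∉ ({v} : Set V)) (hdeg : (G.neighborSet a \ {v}).Subsingleton) :
    ((G.contractSet {v}).neighborSet ⟨a, ha⟩).Subsingleton := by
  have hsub : ∀ w ∈ (G.contractSet {v}).neighborSet ⟨a, ha⟩, w.1 ∈ G.neighborSet a \ {v} :=
    fun w hw => ⟨(contractSet_singleton_adj_iff_of_neighborSet_eq hv).mp hw, w.2⟩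
  exact fun x hx y hy => Subtype.ext (hdeg (hsub x hx) (hsub y hy))

lemma pathGraph_cliqueFree (n : ℕ) : (pathGraph n).CliqueFree 3 :=
  (pathGraph.bicoloring n).colorable.cliqueFree (by simp)

lemma pathGraph_neighborSet_zero_subsingleton (n : ℕ) :
    ((pathGraph (n + 1)).neighborSet 0).Subsingleton := by
  intro x hx y hy
  simp only [mem_neighborSet, pathGraph_adj, Fin.val_zero] at hx hy
  omega

def pathGraphReverse (n : ℕ) : pathGraph n ≃g pathGraph n where
  toEquiv := Fin.revPerm
  map_rel_iff' {a b} := by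
    simp only [Fin.revPerm_apply, pathGraph_adj, Fin.val_rev]
    omega

lemma exists_iso_pathGraph_apply_add_one_eq {n : ℕ} {k : Fin n}
    (hk : ((pathGraph n).neighborSet k).Subsingleton) :
    ∃ σ : pathGraph n ≃g pathGraph n, (σ k : ℕ) + 1 = n := by
  by_cases hlast : (k : ℕ) + 1 = n
  · exact ⟨Iso.refl, hlast⟩
  have hzero : (k : ℕ) = 0 := by
    by_contra hzero
    have hk_lt := k.isLt
    have hprev : (⟨k - 1, by omega⟩ : Fin n) ∈ (pathGraph n).neighborSet k := by
      simp only [mem_neighborSet, pathGraph_adj]; omega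
    have hnext : (⟨k + 1, by omega⟩ : Fin n) ∈ (pathGraph n).neighborSet k := by
      simp [pathGraph_adj]
    have hval := congrArg Fin.val (hk hprev hnext)
    simp only at hval
    omega
  refine ⟨pathGraphReverse n, ?_⟩
  simp only [pathGraphReverse, RelIso.coe_fn_mk, Fin.revPerm_apply, Fin.val_rev]
  omega

lemma Iso.neighborSet_subsingleton {W : Type*} {H : SimpleGraph W}
    (f : G ≃g H) {v : V} (h : (G.neighborSet v).Subsingleton) :
    (H.neighborSet (f v)).Subsingleton :=
  f.image_neighborSet ▸ h.image f

lemma Iso.neighborSet_nontrivial {W : Type*} {H : SimpleGraph W}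
    (f : G ≃g H) {v : V} (h : (G.neighborSet v).Nontrivial) :
    (H.neighborSet (f v)).Nontrivial :=
  f.image_neighborSet ▸ h.image f.injective

lemma nonempty_iso_pathGraph_succ_of_neighborSet_eq {m : ℕ} {v a : V}
    (hv : G.neighborSet v = {a}) (ha : a ∉ ({v} : Set V))
    (g : G.contractSet {v} ≃g pathGraph m) (hg : (g ⟨a, ha⟩ : ℕ) + 1 = m) :
    Nonempty (G ≃g pathGraph (m + 1)) := by
  classical
  let e : Fin (m + 1) ≃ V :=
    finSuccEquivLast.trans ((Equiv.optionCongr g.symm.toEquiv).trans (Equiv.optionSubtypeNe v))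
  have he_last : e (Fin.last m) = v := by simp [e]; rfl
  have he_castSucc (i : Fin m) : e i.castSucc = (g.symm i).1 := by simp [e]; rfl
  have hadj_last (j : Fin m) :
      G.Adj v (g.symm j) ↔ (pathGraph (m + 1)).Adj (Fin.last m) j.castSucc := by
    have hva : G.Adj v (g.symm j) ↔ g.symm j = ⟨a, ha⟩ := by
      rw [← mem_neighborSet, hv, Set.mem_singleton_iff, Subtype.ext_iff]
    rw [hva, g.symm_apply_eq, pathGraph_adj, Fin.ext_iff, Fin.val_last, Fin.val_castSucc]
    omega
  have hadj_castSucc (i j : Fin m) : G.Adj (g.symm i) (g.symm j) ↔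
      (pathGraph (m + 1)).Adj i.castSucc j.castSucc := by
    rw [← contractSet_singleton_adj_iff_of_neighborSet_eq hv, g.symm.map_rel_iff]
    simp only [pathGraph_adj, Fin.val_castSucc]
  refine ⟨(⟨e, fun {i j} => ?_⟩ : pathGraph (m + 1) ≃g G).symm⟩
  induction i using Fin.lastCases <;> induction j using Fin.lastCases <;>
    simp only [he_last, he_castSucc]
  · simp
  · exact hadj_last _
  · rw [G.adj_comm, (pathGraph _).adj_comm]; exact hadj_last _
  · exact hadj_castSucc _ _

lemma exists_neighborSet_eq_singleton {m : ℕ} (hG : G.Connected) (hG3 : G.CliqueFree 3)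
    (hcontr : ∀ v, Nonempty (G.contractSet {v} ≃g pathGraph (m + 1))) :
    ∃ v a, G.neighborSet v = {a} := by
  obtain ⟨v⟩ := hG.nonempty
  obtain ⟨g⟩ := hcontr v
  have : Nontrivial V := ⟨⟨v, g.symm 0, (g.symm 0).2 ∘ Eq.symm⟩⟩
  by_contra! hleaf
  have hnt (w : V) : (G.neighborSet w).Nontrivial := by
    obtain ⟨u, hu⟩ := hG.preconnected.exists_adj_of_nontrivial w
    exact (Set.nonempty_of_mem hu).exists_eq_singleton_or_nontrivial.resolve_left
      fun ⟨a, ha⟩ => hleaf w a ha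
  have h0 := g.neighborSet_nontrivial
    (contractSet_singleton_neighborSet_nontrivial hG3 hnt (g.symm 0))
  rw [g.apply_symm_apply] at h0
  exact h0.not_subsingleton (pathGraph_neighborSet_zero_subsingleton m)

theorem nonempty_iso_pathGraph_of_contractSet {m : ℕ} (hG : G.Connected) (hG3 : G.CliqueFree 3)
    (hcontr : ∀ v, Nonempty (G.contractSet {v} ≃g pathGraph (m + 1))) :
    Nonempty (G ≃g pathGraph (m + 2)) := by
  obtain ⟨v, a, hv⟩ := exists_neighborSet_eq_singleton hG hG3 hcontr
  have hva : G.Adj v a := (hv.symm ▸ rfl : a ∈ G.neighborSet v)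
  have ha : a ∉ ({v} : Set V) := hva.ne'
  obtain ⟨g⟩ := hcontr v
  have hdeg : (G.neighborSet a \ {v}).Subsingleton :=
    neighborSet_diff_subsingleton_of_cliqueFree_contractSet
      ((pathGraph_cliqueFree _).comap (hcontr a).some.isContained) hva.symm
  obtain ⟨σ, hσ⟩ := exists_iso_pathGraph_apply_add_one_eq
    (g.neighborSet_subsingleton (contractSet_singleton_neighborSet_subsingleton hv ha hdeg))
  exact nonempty_iso_pathGraph_succ_of_neighborSet_eq hv ha (g.trans σ) hσ

lemma induce_connected_of_adj_of_adj {a b c : V} (hab : G.Adj a b) (hbc : G.Adj b c) :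
    (G.induce {a, b, c}).Connected := by
  have h := (Walk.cons hab (Walk.cons hbc Walk.nil)).connected_induce_support
  have hs : {v | v ∈ (Walk.cons hab (Walk.cons hbc Walk.nil)).support} =
      ({a, b, c} : Set V) := by
    ext; simp
  rwa [hs] at h

lemma eq_top_of_not_cliqueFree_card [Fintype V] (h : ¬G.CliqueFree (Fintype.card V)) : G = ⊤ := by
  classical
  obtain ⟨s, hs⟩ : ∃ s, G.IsNClique (Fintype.card V) s := by simpa [CliqueFree] using h
  rw [← isClique_univ]
  simpa [Finset.eq_univ_of_card s hs.card_eq] using hs.isClique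

lemma Preconnected.eq_top_of_adj_of_adj (hG : G.Preconnected)
    (h : ∀ a b c, G.Adj a b → G.Adj b c → a ≠ c → G.Adj a c) : G = ⊤ := by
  ext u w
  refine ⟨Adj.ne, fun huw => ?_⟩
  obtain ⟨p⟩ := hG u w
  induction p with
  | nil => exact (huw rfl).elim
  | @cons u b w hub p ih =>
    by_cases hbw : b = w
    · exact hbw ▸ hub
    · exact h u b w hub (ih hbw) huw

lemma Preconnected.eq_top_of_forall_induce_iso_top {W : Type*} (hG : G.Preconnected)
    (h : ∀ a b c, G.Adj a b → G.Adj b c → a ≠ c →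
      Nonempty (G.induce {a, b, c} ≃g (⊤ : SimpleGraph W))) : G = ⊤ := by
  refine hG.eq_top_of_adj_of_adj fun a b c hab hbc hac => ?_
  obtain ⟨f⟩ := h a b c hab hbc hac
  have hne : f ⟨a, by simp⟩ ≠ f ⟨c, by simp⟩ :=
    f.injective.ne fun h => hac (congrArg Subtype.val h)
  exact f.map_rel_iff.mp hne

lemma cliqueFree_three_of_forall_induce_iso {W : Type*} {H : SimpleGraph W} (hH : H.CliqueFree 3)
    (h : ∀ a b c, G.Adj a b → G.Adj b c → a ≠ c → Nonempty (G.induce {a, b, c} ≃g H)) :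
    G.CliqueFree 3 := by
  classical
  intro s hs
  obtain ⟨a, b, c, -, hac, -, rfl⟩ := Finset.card_eq_three.mp hs.card_eq
  obtain ⟨hab, hac', hbc⟩ := is3Clique_triple_iff.mp hs
  obtain ⟨f⟩ := h a b c hab hbc hac
  refine hH.comap f.isContained
    {(⟨a, by simp⟩ : ({a, b, c} : Set V)), ⟨b, by simp⟩, ⟨c, by simp⟩} ?_
  exact is3Clique_triple_iff.mpr ⟨hab, hac', hbc⟩

end SimpleGraph

lemma nonempty_induce_iso_three (Γ : ∀ n : ℕ, SimpleGraph (Fin n))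
    (hind : ∀ n, ∀ S : Set (Fin n), S.Nonempty → S ≠ Set.univ →
      ((Γ n).induce S).Connected → Nonempty ((Γ n).induce S ≃g Γ S.ncard))
    (n : ℕ) : ∀ a b c : Fin n, (Γ n).Adj a b → (Γ n).Adj b c → a ≠ c →
      Nonempty ((Γ n).induce {a, b, c} ≃g Γ 3) := by
  intro a b c hab hbc hac
  have hcard : ({a, b, c} : Set (Fin n)).ncard = 3 :=
    Set.ncard_eq_three.mpr ⟨a, b, c, hab.ne, hac, hbc.ne, rfl⟩
  rcases eq_or_ne ({a, b, c} : Set (Fin n)) Set.univ with huniv | huniv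
  · obtain rfl : n = 3 := by rwa [huniv, Set.ncard_univ, Nat.card_fin] at hcard
    rw [huniv]
    exact ⟨induceUnivIso _⟩
  · exact hcard ▸
      hind n _ (Set.insert_nonempty _ _) huniv (induce_connected_of_adj_of_adj hab hbc)

/-- If `(Γ n)` is a sequence of connected simple graphs on `n` vertices
such that for every `n` and every nonempty proper subset `S` of the vertices with
connected induced subgraph, `Γ_n|_S ≅ Γ_{|S|}` and `Γ_n/S ≅ Γ_{n-|S|}`, then either
every `Γ n` is a path graph, or every `Γ n` is a complete graph. -/
theorem statement0
    (Γ : ∀ n : ℕ, SimpleGraph (Fin n))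
    (hconn : ∀ n, 1 ≤ n → (Γ n).Connected)
    (hind : ∀ n, ∀ S : Set (Fin n), S.Nonempty → S ≠ Set.univ →
      ((Γ n).induce S).Connected →
      Nonempty ((Γ n).induce S ≃g Γ S.ncard))
    (hcontr : ∀ n, ∀ S : Set (Fin n), S.Nonempty → S ≠ Set.univ →
      ((Γ n).induce S).Connected →
      Nonempty ((Γ n).contractSet S ≃g Γ (n - S.ncard))) :
    (∀ n, 1 ≤ n → Nonempty (Γ n ≃g pathGraph n)) ∨
      (∀ n, 1 ≤ n → Nonempty (Γ n ≃g (⊤ : SimpleGraph (Fin n)))) := by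
  have hΓ3 := nonempty_induce_iso_three Γ hind
  by_cases h3 : (Γ 3).CliqueFree 3
  · left
    have hΓ (n : ℕ) : (Γ n).CliqueFree 3 := cliqueFree_three_of_forall_induce_iso h3 (hΓ3 n)
    intro n hn
    induction n, hn using Nat.le_induction with
    | base =>
      have : Subsingleton (SimpleGraph (Fin 1)) := SimpleGraph.subsingleton_iff.mpr inferInstance
      exact ⟨Subsingleton.elim (Γ 1) (pathGraph 1) ▸ Iso.refl⟩
    | succ n hn ih =>
      obtain ⟨m, rfl⟩ : ∃ m, n = m + 1 := ⟨n - 1, by omega⟩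
      refine nonempty_iso_pathGraph_of_contractSet (hconn _ (by omega)) (hΓ _) fun v => ?_
      have hv : ({v} : Set (Fin (m + 2))) ≠ Set.univ := fun h => by
        simpa using congrArg Set.ncard h
      obtain ⟨g⟩ := hcontr _ {v} (Set.singleton_nonempty v) hv
        (by rw [induce_singleton_eq_top]; exact connected_top)
      obtain ⟨g'⟩ := ih
      rw [Set.ncard_singleton] at g
      exact ⟨g.trans g'⟩
  · right
    have htop : Γ 3 = ⊤ := eq_top_of_not_cliqueFree_card (by simpa using h3)
    intro n hn
    rw [(hconn n hn).preconnected.eq_top_of_forall_induce_iso_top (htop ▸ hΓ3 n)]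
    exact ⟨Iso.refl⟩
end

section
/- Let R be a commutative ℚ-algebra and let α(X) = X + Σ_{n≥1} a_n X^{n+1} ∈ R⟦X⟧ be a formal power series with compositional inverse β(X) = X + Σ_{n≥1} b_n X^{n+1} (so that α(β(X)) = X). Then for every n ≥ 1, b_n = (1/(n+1)!) · Σ (−1)^k · (n+k)!/(k_1! k_2! ⋯) · a_1^{k_1} a_2^{k_2} ⋯, where the sum ranges over all finitely supported sequences (k_1, k_2, …) of nonnegative integers with k_1 + 2k_2 + 3k_3 + ⋯ = n, and k = k_1 + k_2 + ⋯. -/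
open PowerSeries

/-- Substitution (composition) of formal power series: `f.subst' g = f(g(X))`,
intended for `g` with zero constant coefficient. -/
noncomputable def PowerSeries.subst' {R : Type*} [CommRing R] (f g : PowerSeries R) :
    PowerSeries R :=
  PowerSeries.mk fun m => ∑ n ∈ Finset.range (m + 1), coeff n f * coeff m (g ^ n)

namespace Statement6Aux
open Finset

variable {R : Type*} [CommRing R]

lemma nat_cancel [Algebra ℚ R] {m : ℕ} (hm : 0 < m) {x y : R}
    (h : (m : R) * x = (m : R) * y) : x = y := by
  have key : ∀ z : R, algebraMap ℚ R (1 / m) * ((m : R) * z) = z := by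
    intro z
    rw [← mul_assoc, ← map_natCast (algebraMap ℚ R) m, ← map_mul, one_div,
      inv_mul_cancel₀ (by exact_mod_cast hm.ne'), map_one, one_mul]
  rw [← key x, h, key y]

lemma coeff_mul_eq_zero {g : R⟦X⟧} {m : ℕ} (h : ∀ q ≤ m, coeff q g = 0) (a : R⟦X⟧) :
    coeff m (a * g) = 0 := by
  rw [coeff_mul]
  refine Finset.sum_eq_zero ?_
  rintro ⟨p, q⟩ hpq
  rw [Finset.HasAntidiagonal.mem_antidiagonal] at hpq
  rw [h q (by omega), mul_zero]

lemma coeff_pow_eq_zero {f : R⟦X⟧} (hf : constantCoeff f = 0) {q k : ℕ} (h : q < k) :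
    coeff q (f ^ k) = 0 := by
  obtain ⟨g, rfl⟩ := X_dvd_iff.mpr hf
  rw [mul_pow, coeff_X_pow_mul', if_neg (by omega)]

set_option maxRecDepth 4000 in
lemma coeff_one_sub_X_pow (d j : ℕ) :
    coeff j ((1 - X : R⟦X⟧) ^ d) = (-1 : R) ^ j * (d.choose j : R) := by
  have h1 : (1 - X : R⟦X⟧) ^ d
      = ∑ k ∈ range (d+1), C ((-1 : R)^k * (d.choose k : R)) * X ^ k := by
    have h0 : (1 - X : R⟦X⟧) = (-X) + 1 := by ring
    rw [h0, add_pow]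
    refine Finset.sum_congr rfl fun k _ => ?_
    rw [one_pow, mul_one, map_mul, map_pow, map_neg, map_one, map_natCast]
    ring
  rw [h1, map_sum]
  rw [Finset.sum_congr rfl fun k _ => by rw [coeff_C_mul, coeff_X_pow]]
  rcases le_or_gt j d with hj | hj
  · rw [Finset.sum_eq_single j (fun k _ hkj => by rw [if_neg fun h => hkj h.symm, mul_zero])
      (fun hj' => absurd (mem_range.mpr (by omega)) hj'), if_pos rfl, mul_one]
  · rw [Nat.choose_eq_zero_of_lt hj,
      Finset.sum_eq_zero fun k hk => by
        rw [if_neg (by rw [mem_range] at hk; omega), mul_zero]]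
    simp

/-- The key binomial identity, from `(1-X)^{n+1} · ∑ choose(n+k,k) X^k = 1`. -/
lemma choose_id (n t : ℕ) :
    (∑ p ∈ Finset.HasAntidiagonal.antidiagonal t,
      (-1 : R) ^ p.2 * ((n+1).choose p.1 : R) * ((n+p.2).choose p.2 : R))
      = if t = 0 then 1 else 0 := by
  have hmain := congrArg (coeff t) (invOneSubPow R (n+1)).inv_val
  rw [invOneSubPow_val_succ_eq_mk_add_choose, coeff_mul, coeff_one] at hmain
  have h2 : ∑ p ∈ Finset.HasAntidiagonal.antidiagonal t,
      (-1 : R) ^ p.1 * ((n+1).choose p.1 : R) * ((n+p.2).choose p.2 : R)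
      = if t = 0 then 1 else 0 := by
    rw [← hmain]
    refine Finset.sum_congr rfl fun p hp => ?_
    rw [invOneSubPow_inv_eq_one_sub_pow, coeff_one_sub_X_pow, coeff_mk]
    have : (n + p.2).choose p.2 = (n + p.2).choose n := by
      rw [← Nat.choose_symm (Nat.le_add_left _ _), Nat.add_sub_cancel]
    rw [this]
  rcases Nat.eq_zero_or_pos t with rfl | ht
  · rw [← h2]
    refine Finset.sum_congr rfl fun p hp => ?_
    rw [Finset.HasAntidiagonal.mem_antidiagonal] at hp
    have h1 : p.1 = 0 := by omega
    have h2 : p.2 = 0 := by omega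
    rw [h1, h2]
  · have sq : ∀ k : ℕ, (-1 : R)^k * (-1)^k = 1 := fun k => by
      rw [← pow_add, ← two_mul, pow_mul]; simp
    have flip : ∀ p ∈ Finset.HasAntidiagonal.antidiagonal t, ((-1 : R)^p.2 = (-1)^t * (-1)^p.1) := by
      intro p hp
      rw [Finset.HasAntidiagonal.mem_antidiagonal] at hp
      rw [← hp, pow_add, mul_right_comm, sq p.1, one_mul]
    rw [Finset.sum_congr rfl fun p hp => by rw [flip p hp]]
    have : ∀ p ∈ Finset.HasAntidiagonal.antidiagonal t, (-1:R)^t * (-1)^p.1 * ((n+1).choose p.1 : R) * ((n+p.2).choose p.2 : R) = (-1:R)^t * ((-1)^p.1 * ((n+1).choose p.1 : R) * ((n+p.2).choose p.2 : R)) := fun p _ => by ring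
    rw [Finset.sum_congr rfl this, ← Finset.mul_sum, h2]
    rw [if_neg ht.ne', mul_zero]


lemma partA [Algebra ℚ R] (α β u v : R⟦X⟧) (hα1 : coeff 1 α = 1)
    (hXu : X * u = α) (huv : u * v = 1) (h2 : β.subst' α = X) (n : ℕ) :
    coeff n (v ^ (n+1)) = ((n+1 : ℕ) : R) * coeff (n+1) β := by
  have hα0 : constantCoeff α = 0 := by
    rw [← hXu, map_mul, constantCoeff_X, zero_mul]
  have hu0 : constantCoeff u = 1 := by
    have h := coeff_succ_X_mul 0 u
    rw [hXu, hα1] at h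
    rw [← coeff_zero_eq_constantCoeff_apply, h]
  have hv0 : constantCoeff v = 1 := by
    have h := congrArg (constantCoeff) huv
    rw [map_mul, map_one, hu0, one_mul] at h
    exact h
  have hDα0 : constantCoeff (d⁄dX R α) = 1 := by
    rw [← coeff_zero_eq_constantCoeff_apply, coeff_derivative, hα1]
    norm_num
  -- the "residue" key lemma
  have key : ∀ m : ℕ, 1 ≤ m → coeff m (d⁄dX R α * v ^ (m+1)) = 0 := by
    rintro m hm
    obtain ⟨m', rfl⟩ : ∃ m', m = m' + 1 := ⟨m - 1, by omega⟩
    have hα' : d⁄dX R α = u + X * d⁄dX R u := by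
      rw [← hXu, Derivation.leibniz, smul_eq_mul, smul_eq_mul, derivative_X, mul_one, add_comm]
    have hv' : d⁄dX R v = -(v ^ 2 * d⁄dX R u) := by
      have h := (d⁄dX R).leibniz_of_mul_eq_one (show v * u = 1 by rw [mul_comm]; exact huv)
      rw [h, smul_eq_mul]; ring
    have step1 : d⁄dX R α * v ^ (m' + 1 + 1)
        = v ^ (m' + 1) + X * (d⁄dX R u * v ^ (m' + 1 + 1)) := by
      rw [hα']
      have h1 : u * v ^ (m' + 1 + 1) = v ^ (m' + 1) := by
        calc u * v ^ (m' + 1 + 1) = (u * v) * v ^ (m' + 1) := by ring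
        _ = v ^ (m' + 1) := by rw [huv, one_mul]
      calc (u + X * d⁄dX R u) * v ^ (m' + 1 + 1)
          = u * v ^ (m' + 1 + 1) + X * (d⁄dX R u * v ^ (m' + 1 + 1)) := by ring
      _ = _ := by rw [h1]
    have step3 : d⁄dX R (v ^ (m' + 1)) = -((m' + 1 : ℕ) • (d⁄dX R u * v ^ (m' + 1 + 1))) := by
      rw [Derivation.leibniz_pow, Nat.add_sub_cancel, hv']
      have h3 : v ^ m' • -(v ^ 2 * d⁄dX R u) = -(d⁄dX R u * v ^ (m' + 1 + 1)) := by
        rw [smul_eq_mul]; ring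
      rw [h3, smul_neg]
    have step4 : coeff (m' + 1) (v ^ (m' + 1)) * ((m' + 1 : ℕ) : R)
        = -(((m' + 1 : ℕ) : R) * coeff m' (d⁄dX R u * v ^ (m' + 1 + 1))) := by
      have h := congrArg (coeff m') step3
      rw [coeff_derivative, map_neg, map_nsmul, nsmul_eq_mul] at h
      push_cast at h ⊢
      rw [h]
    rw [step1, map_add, coeff_succ_X_mul]
    refine nat_cancel (m := m' + 1) (by omega) ?_
    rw [mul_zero, mul_add, mul_comm ((m' + 1 : ℕ) : R) (coeff (m' + 1) (v ^ (m' + 1))), step4]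
    ring
  -- the finite partial sum of the substitution
  set S : R⟦X⟧ := ∑ j ∈ range (n+3), C (coeff j β) * α ^ j with hSdef
  have hS : ∀ m, m ≤ n+2 → coeff m S = coeff m (X : R⟦X⟧) := by
    intro m hm
    have h := congrArg (coeff m) h2
    rw [subst', coeff_mk] at h
    rw [hSdef, map_sum, ← h,
      Finset.sum_congr rfl fun j _ => coeff_C_mul m (α ^ j) (coeff j β)]
    exact (Finset.sum_subset (Finset.range_subset_range.mpr (by omega : m+1 ≤ n+3))
      (fun j _ hj' => by
        rw [coeff_pow_eq_zero hα0 (by rw [mem_range] at hj'; omega), mul_zero])).symm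
  have hS' : ∀ m, m ≤ n+1 → coeff m (d⁄dX R S) = coeff m (1 : R⟦X⟧) := by
    intro m hm
    rw [coeff_derivative, hS (m+1) (by omega), coeff_X, coeff_one]
    cases m with
    | zero => norm_num
    | succ m => norm_num
  have hw : coeff n (d⁄dX R S * v ^ (n+1)) = coeff n (v ^ (n+1)) := by
    calc coeff n (d⁄dX R S * v ^ (n+1)) = coeff n ((1 : R⟦X⟧) * v ^ (n+1)) := by
          rw [coeff_mul, coeff_mul]
          exact Finset.sum_congr rfl fun p hp => by
            rw [Finset.HasAntidiagonal.mem_antidiagonal] at hp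
            rw [hS' p.1 (by omega)]
    _ = coeff n (v ^ (n+1)) := by rw [one_mul]
  have hDS : d⁄dX R S = ∑ j ∈ range (n+3), C (coeff j β) * d⁄dX R (α ^ j) := by
    rw [hSdef, map_sum]
    refine Finset.sum_congr rfl fun j _ => ?_
    rw [Derivation.leibniz, derivative_C, smul_zero, add_zero, smul_eq_mul]
  have hterm : ∀ j ∈ range (n+3), coeff n (C (coeff j β) * d⁄dX R (α ^ j) * v ^ (n+1))
      = if j = n+1 then ((n+1 : ℕ) : R) * coeff (n+1) β else 0 := by
    intro j hj
    rcases j with _ | j'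
    · rw [if_neg (by omega), pow_zero]
      simp
    · have hDpow : d⁄dX R (α ^ (j' + 1)) = (j' + 1 : ℕ) • (α ^ j' * d⁄dX R α) := by
        rw [Derivation.leibniz_pow, Nat.add_sub_cancel, smul_eq_mul]
      have hre : C (coeff (j'+1) β) * d⁄dX R (α ^ (j'+1)) * v ^ (n+1)
          = (j' + 1 : ℕ) • (C (coeff (j'+1) β) * (α ^ j' * d⁄dX R α * v ^ (n+1))) := by
        rw [hDpow, nsmul_eq_mul, nsmul_eq_mul]; ring
      rw [hre, map_nsmul, nsmul_eq_mul, coeff_C_mul]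
      rcases lt_trichotomy j' n with hlt | heq | hgt
      · -- 1 ≤ n - j', use key
        have hsplit : α ^ j' * d⁄dX R α * v ^ (n+1)
            = X ^ j' * (d⁄dX R α * v ^ (n - j' + 1)) := by
          rw [← hXu]
          have h1 : v ^ (n+1) = v ^ j' * v ^ (n - j' + 1) := by
            rw [← pow_add]; congr 1; omega
          have h2 : (u * v) ^ j' = 1 := by rw [huv, one_pow]
          calc (X * u) ^ j' * d⁄dX R (X*u) * v ^ (n+1)
              = X ^ j' * (d⁄dX R (X*u) * v ^ (n - j' + 1)) * (u * v) ^ j' := by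
                rw [mul_pow, mul_pow, h1]; ring
          _ = X ^ j' * (d⁄dX R (X*u) * v ^ (n - j' + 1)) := by rw [h2, mul_one]
        rw [hsplit, coeff_X_pow_mul', if_pos (by omega), key (n - j') (by omega), mul_zero,
          mul_zero, if_neg (by omega)]
      · -- j' = n : main term
        subst heq
        have hsplit : α ^ j' * d⁄dX R α * v ^ (j'+1)
            = X ^ j' * (d⁄dX R α * v) := by
          rw [← hXu]
          have h2 : (u * v) ^ j' = 1 := by rw [huv, one_pow]
          calc (X * u) ^ j' * d⁄dX R (X*u) * v ^ (j'+1)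
              = X ^ j' * (d⁄dX R (X*u) * v) * (u * v) ^ j' := by
                rw [mul_pow, mul_pow]; ring
          _ = X ^ j' * (d⁄dX R (X*u) * v) := by rw [h2, mul_one]
        rw [hsplit, coeff_X_pow_mul', if_pos (le_refl _), Nat.sub_self,
          coeff_zero_eq_constantCoeff_apply, map_mul, hDα0, hv0, one_mul, mul_one, if_pos rfl]
      · -- j' > n : zero
        have hsplit : α ^ j' * d⁄dX R α * v ^ (n+1)
            = X ^ j' * (u ^ j' * d⁄dX R α * v ^ (n+1)) := by
          rw [← hXu, mul_pow]; ring
        rw [hsplit, coeff_X_pow_mul', if_neg (by omega), mul_zero, mul_zero, if_neg (by omega)]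
  have hfin : coeff n (d⁄dX R S * v ^ (n+1))
      = ((n+1 : ℕ) : R) * coeff (n+1) β := by
    rw [hDS, Finset.sum_mul, map_sum, Finset.sum_congr rfl hterm,
      Finset.sum_ite_eq' (range (n+3)) (n+1), if_pos (by rw [mem_range]; omega)]
  rw [← hw, hfin]


lemma partB (u v f : R⟦X⟧) (huv : u * v = 1) (hf : u = 1 + f)
    (hf0 : constantCoeff f = 0) (n : ℕ) :
    coeff n (v ^ (n+1))
      = ∑ k ∈ range (n+1), (-1 : R)^k * ((n+k).choose k : R) * coeff n (f ^ k) := by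
  set G : R⟦X⟧ := mk fun m => ∑ k ∈ range (m+1),
    (-1 : R)^k * ((n+k).choose k : R) * coeff m (f ^ k) with hGdef
  have hG : u ^ (n+1) * G = 1 := by
    ext m
    rw [coeff_one]
    set B : R⟦X⟧ := ∑ k ∈ range (m+1),
      C ((-1 : R)^k * ((n+k).choose k : R)) * f ^ k with hBdef
    have hGB : ∀ q, q ≤ m → coeff q G = coeff q B := by
      intro q hq
      rw [hGdef, coeff_mk, hBdef, map_sum,
        Finset.sum_congr rfl fun k _ =>
          coeff_C_mul q (f ^ k) ((-1 : R)^k * ((n+k).choose k : R))]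
      exact Finset.sum_subset (Finset.range_subset_range.mpr (by omega))
        (fun k _ hk => by
          rw [coeff_pow_eq_zero hf0 (by rw [mem_range] at hk; omega), mul_zero])
    have hsub : coeff m (u ^ (n+1) * G) = coeff m (u ^ (n+1) * B) := by
      have hsplit : u ^ (n+1) * G = u ^ (n+1) * B + u ^ (n+1) * (G - B) := by ring
      have hz : coeff m (u ^ (n+1) * (G - B)) = 0 :=
        coeff_mul_eq_zero (fun q hq => by rw [map_sub, hGB q hq, sub_self]) _
      rw [hsplit, map_add, hz, add_zero]
    rw [hsub]
    have hu : u ^ (n+1) = ∑ j ∈ range (n+2), C (((n+1).choose j : R)) * f ^ j := by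
      rw [hf, add_comm 1 f, add_pow]
      refine Finset.sum_congr rfl fun j _ => ?_
      rw [one_pow, mul_one, map_natCast]
      ring
    rw [hu, hBdef, Finset.sum_mul_sum, map_sum]
    rw [Finset.sum_congr rfl fun j _ => map_sum (coeff m) _ (range (m+1))]
    have hterm1 : ∀ j k : ℕ, coeff m ((C (((n+1).choose j : R)) * f ^ j) *
        (C ((-1 : R)^k * ((n+k).choose k : R)) * f ^ k))
        = ((n+1).choose j : R) * ((-1 : R)^k * ((n+k).choose k : R)) * coeff m (f ^ (j+k)) := by
      intro j k
      have h1 : (C (((n+1).choose j : R)) * f ^ j) *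
          (C ((-1 : R)^k * ((n+k).choose k : R)) * f ^ k)
          = C (((n+1).choose j : R)) * (C ((-1 : R)^k * ((n+k).choose k : R)) * f ^ (j+k)) := by
        rw [pow_add]; ring
      rw [h1, coeff_C_mul, coeff_C_mul]
      ring
    rw [Finset.sum_congr rfl fun j _ => Finset.sum_congr rfl fun k _ => hterm1 j k]
    -- now pad the ranges
    set T : ℕ → ℕ → R := fun j k =>
      ((n+1).choose j : R) * ((-1 : R)^k * ((n+k).choose k : R)) * coeff m (f ^ (j+k)) with hT
    set M := m + n + 1 with hM
    have pad1 : ∀ j ∈ range (n+2), ∑ k ∈ range (m+1), T j k = ∑ k ∈ range (M+1), T j k := by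
      intro j _
      refine Finset.sum_subset (Finset.range_subset_range.mpr (by omega)) (fun k _ hk => ?_)
      rw [mem_range, not_lt] at hk
      simp only [hT]
      rw [coeff_pow_eq_zero hf0 (by omega), mul_zero]
    rw [Finset.sum_congr rfl pad1]
    have pad2 : ∑ j ∈ range (n+2), ∑ k ∈ range (M+1), T j k
        = ∑ j ∈ range (M+1), ∑ k ∈ range (M+1), T j k := by
      refine Finset.sum_subset (Finset.range_subset_range.mpr (by omega)) (fun j _ hj => ?_)
      rw [mem_range, not_lt] at hj
      refine Finset.sum_eq_zero fun k _ => ?_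
      simp only [hT]
      rw [Nat.choose_eq_zero_of_lt (by omega), Nat.cast_zero, zero_mul, zero_mul]
    rw [pad2, ← Finset.sum_product']
    have hmaps : ∀ p : ℕ × ℕ, p ∈ range (M+1) ×ˢ range (M+1) → p.1 + p.2 ∈ range (2*M+2) := by
      intro p hp
      rw [mem_product, mem_range, mem_range] at hp
      rw [mem_range]; omega
    rw [← Finset.sum_fiberwise_of_maps_to hmaps (fun p => T p.1 p.2)]
    have hI : ∀ t ∈ range (2*M+2),
        (∑ p ∈ (range (M+1) ×ˢ range (M+1)).filter (fun p => p.1 + p.2 = t), T p.1 p.2)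
        = if t = 0 then (if m = 0 then (1:R) else 0) else 0 := by
      intro t _
      have hc : ∀ p ∈ (range (M+1) ×ˢ range (M+1)).filter (fun p => p.1 + p.2 = t),
          T p.1 p.2 = ((-1 : R)^p.2 * ((n+1).choose p.1 : R) * ((n+p.2).choose p.2 : R))
            * coeff m (f ^ t) := by
        intro p hp
        rw [mem_filter] at hp
        simp only [hT]
        rw [← hp.2]
        ring
      rw [Finset.sum_congr rfl hc, ← Finset.sum_mul]
      rcases le_or_gt t M with htM | htM
      · have hfil : (range (M+1) ×ˢ range (M+1)).filter (fun p => p.1 + p.2 = t)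
            = Finset.HasAntidiagonal.antidiagonal t := by
          ext p
          simp only [mem_filter, mem_product, mem_range, Finset.HasAntidiagonal.mem_antidiagonal]
          omega
        rw [hfil, choose_id]
        rcases Nat.eq_zero_or_pos t with rfl | ht
        · rw [if_pos rfl, if_pos rfl, one_mul, pow_zero, coeff_one]
        · rw [if_neg ht.ne', if_neg ht.ne', zero_mul]
      · rw [coeff_pow_eq_zero hf0 (by omega), mul_zero, if_neg (by omega)]
    rw [Finset.sum_congr rfl hI, Finset.sum_ite_eq' (range (2*M+2)) 0
      (fun _ => if m = 0 then (1:R) else 0), if_pos (by rw [mem_range]; omega)]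
  have hG2 : v ^ (n+1) = G := by
    have h1 : v ^ (n+1) * (u ^ (n+1) * G) = v ^ (n+1) := by rw [hG, mul_one]
    calc v ^ (n+1) = (u * v) ^ (n+1) * G := by rw [← h1]; ring
    _ = G := by rw [huv, one_pow, one_mul]
  rw [hG2, hGdef, coeff_mk]


lemma coeff_agree_pow {n : ℕ} {A B : R⟦X⟧} (h : ∀ q ≤ n, coeff q A = coeff q B) :
    ∀ k q, q ≤ n → coeff q (A ^ k) = coeff q (B ^ k) := by
  intro k
  induction k with
  | zero => intro q _; rfl
  | succ k ih =>
    intro q hq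
    rw [pow_succ, pow_succ, coeff_mul, coeff_mul]
    refine Finset.sum_congr rfl fun p hp => ?_
    rw [Finset.HasAntidiagonal.mem_antidiagonal] at hp
    rw [ih p.1 (by omega), h p.2 (by omega)]

lemma partC1 (f : R⟦X⟧) (hf0 : constantCoeff f = 0) (n k : ℕ) :
    coeff n (f ^ k)
      = ∑ g ∈ ((Finset.Icc 1 n).piAntidiag k).filter
          (fun g => ∑ i ∈ Finset.Icc 1 n, i * g i = n),
          (Nat.multinomial (Finset.Icc 1 n) g : R) *
            ∏ i ∈ Finset.Icc 1 n, (coeff i f) ^ g i := by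
  set c : ℕ → R := fun i => coeff i f with hc
  set P : R⟦X⟧ := ∑ i ∈ Finset.Icc 1 n, C (c i) * X ^ i with hP
  have hagree : ∀ q ≤ n, coeff q f = coeff q P := by
    intro q hq
    rw [hP, map_sum, Finset.sum_congr rfl fun i _ => by
      rw [coeff_C_mul, coeff_X_pow]]
    simp only [mul_ite, mul_one, mul_zero]
    rw [Finset.sum_ite_eq (Finset.Icc 1 n) q c]
    rcases Nat.eq_zero_or_pos q with rfl | hq1
    · rw [if_neg (by simp), ← coeff_zero_eq_constantCoeff_apply] at *
      exact hf0
    · rw [if_pos (by rw [Finset.mem_Icc]; omega)]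
  rw [coeff_agree_pow hagree k n le_rfl]
  have hPpow : P ^ k = (∑ i ∈ Finset.Icc 1 n, (fun i => C (c i) * X ^ i) i) ^ k := by rw [hP]
  classical
  rw [hPpow, Finset.sum_pow_eq_sum_piAntidiag, map_sum]
  have hterm : ∀ g ∈ (Finset.Icc 1 n).piAntidiag k,
      coeff n ((Nat.multinomial (Finset.Icc 1 n) g : R⟦X⟧) *
        ∏ i ∈ Finset.Icc 1 n, (C (c i) * X ^ i) ^ g i)
      = if (∑ i ∈ Finset.Icc 1 n, i * g i) = n then
          (Nat.multinomial (Finset.Icc 1 n) g : R) * ∏ i ∈ Finset.Icc 1 n, c i ^ g i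
        else 0 := by
    intro g _
    have hprod : ∏ i ∈ Finset.Icc 1 n, (C (c i) * X ^ i) ^ g i
        = C (∏ i ∈ Finset.Icc 1 n, c i ^ g i) * X ^ (∑ i ∈ Finset.Icc 1 n, i * g i) := by
      rw [map_prod, ← Finset.prod_pow_eq_pow_sum, ← Finset.prod_mul_distrib]
      refine Finset.prod_congr rfl fun i _ => ?_
      rw [mul_pow, map_pow, ← pow_mul]
    have hre : (Nat.multinomial (Finset.Icc 1 n) g : R⟦X⟧) *
        (C (∏ i ∈ Finset.Icc 1 n, c i ^ g i) * X ^ (∑ i ∈ Finset.Icc 1 n, i * g i))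
        = C ((Nat.multinomial (Finset.Icc 1 n) g : R) * ∏ i ∈ Finset.Icc 1 n, c i ^ g i)
          * X ^ (∑ i ∈ Finset.Icc 1 n, i * g i) := by
      rw [map_mul, map_natCast]
      ring
    rw [hprod, hre, coeff_C_mul, coeff_X_pow, mul_ite, mul_one, mul_zero]
    by_cases h : (∑ i ∈ Finset.Icc 1 n, i * g i) = n
    · rw [if_pos h, if_pos h.symm]
    · rw [if_neg h, if_neg (fun hh => h hh.symm)]
  rw [Finset.sum_congr rfl hterm, ← Finset.sum_filter]


end Statement6Aux

open Statement6Aux Finset in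
/-- If `α = X + ∑_{n ≥ 1} a_n X^{n+1}` has compositional inverse
`β = X + ∑_{n ≥ 1} b_n X^{n+1}` over a commutative `ℚ`-algebra, then
`b_n = (1/(n+1)!) ∑ (-1)^k (n+k)!/(k₁! k₂! ⋯) a₁^{k₁} a₂^{k₂} ⋯`, the sum over all
finitely supported sequences `(k₁, k₂, …)` of nonnegative integers with
`k₁ + 2k₂ + 3k₃ + ⋯ = n`, where `k = k₁ + k₂ + ⋯`. -/
theorem statement6 {R : Type*} [CommRing R] [Algebra ℚ R] (α β : PowerSeries R)
    (hα0 : constantCoeff α = 0) (hα1 : coeff 1 α = 1)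
    (hβ0 : constantCoeff β = 0) (hβ1 : coeff 1 β = 1)
    (h1 : α.subst' β = X) (h2 : β.subst' α = X) :
    ∀ n : ℕ, 1 ≤ n →
      coeff (n + 1) β =
        algebraMap ℚ R (1 / (n + 1).factorial) *
          ∑ᶠ k ∈ {k : ℕ →₀ ℕ | k 0 = 0 ∧ (k.sum fun i m => i * m) = n},
            ((-1 : R) ^ (k.sum fun _ m => m) *
              algebraMap ℚ R (((n + k.sum fun _ m => m).factorial : ℚ) /
                ∏ i ∈ k.support, ((k i).factorial : ℚ)) *
              ∏ i ∈ k.support, (coeff (i + 1) α) ^ k i) := by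
  intro n hn
  classical
  set u : R⟦X⟧ := mk fun m => coeff (m+1) α with hudef
  have hXu : X * u = α := by
    ext m
    cases m with
    | zero =>
      rw [coeff_zero_eq_constantCoeff_apply, map_mul, constantCoeff_X, zero_mul,
        coeff_zero_eq_constantCoeff_apply, hα0]
    | succ m => rw [coeff_succ_X_mul, hudef, coeff_mk]
  have hu0 : constantCoeff u = 1 := by
    rw [hudef, ← coeff_zero_eq_constantCoeff_apply, coeff_mk, hα1]
  set v : R⟦X⟧ := invOfUnit u 1 with hvdef
  have huv : u * v = 1 := mul_invOfUnit u 1 (by rw [hu0, Units.val_one])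
  set f : R⟦X⟧ := u - 1 with hfdef
  have hfu : u = 1 + f := by rw [hfdef]; ring
  have hf0 : constantCoeff f = 0 := by rw [hfdef, map_sub, map_one, hu0, sub_self]
  have hfi : ∀ i, 1 ≤ i → coeff i f = coeff (i+1) α := by
    intro i hi
    rw [hfdef, map_sub, hudef, coeff_mk, coeff_one, if_neg (by omega), sub_zero]
  have hA := partA α β u v hα1 hXu huv h2 n
  have hB := partB u v f huv hfu hf0 n
  set Fk : ℕ → Finset (ℕ →₀ ℕ) := fun k =>
    ((Finset.Icc 1 n).finsuppAntidiag k).filter fun κ => (κ.sum fun i m => i * m) = n with hFk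
  set S : Finset (ℕ →₀ ℕ) := (range (n+1)).biUnion Fk with hSdef
  have hmem : ∀ k, ∀ κ ∈ Fk k, κ.support ⊆ Finset.Icc 1 n ∧ (∑ i ∈ Finset.Icc 1 n, κ i) = k
      ∧ (κ.sum fun i m => i * m) = n := by
    intro k κ hκ
    rw [hFk, mem_filter, mem_finsuppAntidiag] at hκ
    exact ⟨hκ.1.2, hκ.1.1, hκ.2⟩
  have hsum_eq : ∀ κ : ℕ →₀ ℕ, κ.support ⊆ Finset.Icc 1 n →
      (κ.sum fun _ m => m) = ∑ i ∈ Finset.Icc 1 n, κ i := by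
    intro κ hs
    rw [Finsupp.sum]
    exact Finset.sum_subset hs (fun i _ hi => by rwa [Finsupp.notMem_support_iff] at hi)
  have hwt_eq : ∀ κ : ℕ →₀ ℕ, κ.support ⊆ Finset.Icc 1 n →
      (κ.sum fun i m => i * m) = ∑ i ∈ Finset.Icc 1 n, i * κ i := by
    intro κ hs
    rw [Finsupp.sum]
    exact Finset.sum_subset hs (fun i _ hi => by
      rw [Finsupp.notMem_support_iff] at hi
      rw [hi, mul_zero])
  have hset : {κ : ℕ →₀ ℕ | κ 0 = 0 ∧ (κ.sum fun i m => i * m) = n} = ↑S := by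
    ext κ
    simp only [Set.mem_setOf_eq, Finset.mem_coe, hSdef, mem_biUnion]
    constructor
    · rintro ⟨h0, hw⟩
      have hsupp : κ.support ⊆ Finset.Icc 1 n := by
        intro i hi
        rw [Finsupp.mem_support_iff] at hi
        have hi1 : 1 ≤ i := by
          rcases Nat.eq_zero_or_pos i with rfl | h
          · exact absurd h0 hi
          · exact h
        have hile : i ≤ n := by
          calc i ≤ i * κ i := Nat.le_mul_of_pos_right i (by omega)
          _ ≤ κ.sum fun i m => i * m := by
              rw [Finsupp.sum]
              exact Finset.single_le_sum (f := fun i => i * κ i) (fun _ _ => Nat.zero_le _)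
                (Finsupp.mem_support_iff.mpr hi)
          _ = n := hw
        rw [Finset.mem_Icc]; exact ⟨hi1, hile⟩
      refine ⟨κ.sum fun _ m => m, mem_range.mpr ?_, ?_⟩
      · have hle : (κ.sum fun _ m => m) ≤ κ.sum fun i m => i * m := by
          rw [Finsupp.sum, Finsupp.sum]
          refine Finset.sum_le_sum fun i hi => ?_
          have hmem' := hsupp hi
          rw [Finset.mem_Icc] at hmem'
          exact Nat.le_mul_of_pos_left _ (by omega)
        omega
      · rw [hFk, mem_filter, mem_finsuppAntidiag]
        exact ⟨⟨(hsum_eq κ hsupp).symm, hsupp⟩, hw⟩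
    · rintro ⟨k, -, hκ⟩
      obtain ⟨hsupp, -, hw⟩ := hmem k κ hκ
      refine ⟨?_, hw⟩
      by_contra h0
      have h1 := hsupp (Finsupp.mem_support_iff.mpr h0)
      rw [Finset.mem_Icc] at h1; omega
  rw [hset, finsum_mem_coe_finset]
  refine nat_cancel (m := n+1) (by omega) ?_
  rw [← hA, hB]
  have hfac1 : ((n+1 : ℕ) : R) * algebraMap ℚ R (1 / (n+1).factorial)
      = algebraMap ℚ R (1 / n.factorial) := by
    rw [← map_natCast (algebraMap ℚ R) (n+1), ← map_mul]
    congr 1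
    have h2' : ((n.factorial : ℚ)) ≠ 0 := by exact_mod_cast n.factorial_ne_zero
    rw [Nat.factorial_succ]
    push_cast
    field_simp
  rw [← mul_assoc, hfac1, Finset.mul_sum]
  have hdisj : ∀ k1 ∈ (range (n+1) : Finset ℕ), ∀ k2 ∈ range (n+1), k1 ≠ k2 →
      Disjoint (Fk k1) (Fk k2) := by
    intro k1 _ k2 _ hne
    rw [Finset.disjoint_left]
    intro κ ha hb
    obtain ⟨-, he1, -⟩ := hmem k1 κ ha
    obtain ⟨-, he2, -⟩ := hmem k2 κ hb
    exact hne (by rw [← he1, ← he2])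
  rw [hSdef, Finset.sum_biUnion hdisj]
  rw [Finset.sum_congr rfl fun k _ => by rw [partC1 f hf0 n k, Finset.mul_sum]]
  refine Finset.sum_congr rfl fun k hk => ?_
  refine (Finset.sum_bij (fun (κ : ℕ →₀ ℕ) (_ : κ ∈ Fk k) => (κ : ℕ → ℕ)) ?_ ?_ ?_ ?_).symm
  · intro κ hκ
    obtain ⟨hsupp, he, hw⟩ := hmem k κ hκ
    rw [mem_filter, mem_piAntidiag]
    refine ⟨⟨he, fun i hi => hsupp (Finsupp.mem_support_iff.mpr hi)⟩, ?_⟩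
    rw [← hwt_eq κ hsupp]
    exact hw
  · intro κ1 h1' κ2 h2' h
    exact DFunLike.coe_injective h
  · intro g hg
    rw [mem_filter, mem_piAntidiag] at hg
    refine ⟨Finsupp.onFinset (Finset.Icc 1 n) g (fun a ha => hg.1.2 a ha), ?_, rfl⟩
    have hsupp : (Finsupp.onFinset (Finset.Icc 1 n) g (fun a ha => hg.1.2 a ha)).support
        ⊆ Finset.Icc 1 n := Finsupp.support_onFinset_subset
    rw [hFk, mem_filter, mem_finsuppAntidiag]
    refine ⟨⟨hg.1.1, hsupp⟩, ?_⟩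
    rw [hwt_eq _ hsupp]
    exact hg.2
  · intro κ hκ
    obtain ⟨hsupp, he, hw⟩ := hmem k κ hκ
    have hSk : (κ.sum fun _ m => m) = k := by rw [hsum_eq κ hsupp, he]
    have hprod1 : ∏ i ∈ κ.support, (coeff (i+1) α) ^ κ i
        = ∏ i ∈ Finset.Icc 1 n, (coeff i f) ^ κ i := by
      rw [Finset.prod_congr rfl (fun i hi => by
        rw [← hfi i (by have hm := hsupp hi; rw [Finset.mem_Icc] at hm; omega)])]
      exact Finset.prod_subset hsupp (fun i _ hi => by
        rw [Finsupp.notMem_support_iff] at hi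
        rw [hi, pow_zero])
    have hfacprod : ∏ i ∈ κ.support, ((κ i).factorial : ℚ)
        = ∏ i ∈ Finset.Icc 1 n, ((κ i).factorial : ℚ) := by
      refine Finset.prod_subset hsupp (fun i _ hi => by
        rw [Finsupp.notMem_support_iff] at hi
        rw [hi, Nat.factorial_zero, Nat.cast_one])
    have hk! : k.factorial
        = (∏ i ∈ Finset.Icc 1 n, (κ i).factorial) * Nat.multinomial (Finset.Icc 1 n) ⇑κ := by
      rw [← he]
      exact (Nat.multinomial_spec _ _).symm
    have hnat : (n + k).factorial
        = ((n+k).choose k * Nat.multinomial (Finset.Icc 1 n) ⇑κ)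
          * (n.factorial * ∏ i ∈ Finset.Icc 1 n, (κ i).factorial) := by
      have hch := Nat.choose_mul_factorial_mul_factorial (Nat.le_add_left k n)
      rw [Nat.add_sub_cancel] at hch
      calc (n + k).factorial = (n+k).choose k * k.factorial * n.factorial := hch.symm
      _ = _ := by rw [hk!]; ring
    have hQ : (1 / (n.factorial : ℚ)) *
        (((n + k).factorial : ℚ) / ∏ i ∈ κ.support, ((κ i).factorial : ℚ))
        = (((n+k).choose k * Nat.multinomial (Finset.Icc 1 n) ⇑κ : ℕ) : ℚ) := by
      rw [hfacprod]
      have hne1 : (n.factorial : ℚ) ≠ 0 := by exact_mod_cast n.factorial_ne_zero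
      have hne2 : (∏ i ∈ Finset.Icc 1 n, ((κ i).factorial : ℚ)) ≠ 0 := by
        refine Finset.prod_ne_zero_iff.mpr fun i _ => ?_
        exact_mod_cast (κ i).factorial_ne_zero
      have hcast := congrArg (Nat.cast : ℕ → ℚ) hnat
      push_cast at hcast ⊢
      field_simp
      linear_combination hcast
    calc algebraMap ℚ R (1 / n.factorial) *
          ((-1 : R) ^ (κ.sum fun _ m => m) *
            algebraMap ℚ R (((n + κ.sum fun _ m => m).factorial : ℚ) /
              ∏ i ∈ κ.support, ((κ i).factorial : ℚ)) *
            ∏ i ∈ κ.support, (coeff (i + 1) α) ^ κ i)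
        = (-1 : R) ^ k *
            (algebraMap ℚ R ((1 / (n.factorial : ℚ)) *
              (((n + k).factorial : ℚ) / ∏ i ∈ κ.support, ((κ i).factorial : ℚ)))) *
            ∏ i ∈ κ.support, (coeff (i + 1) α) ^ κ i := by
          rw [hSk, map_mul]
          ring
    _ = (-1 : R) ^ k * ((n+k).choose k : R) * (Nat.multinomial (Finset.Icc 1 n) ⇑κ : R) *
          ∏ i ∈ Finset.Icc 1 n, (coeff i f) ^ κ i := by
          rw [hQ, map_natCast, hprod1]
          push_cast
          ring
    _ = (-1 : R) ^ k * ((n+k).choose k : R) *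
          ((Nat.multinomial (Finset.Icc 1 n) ⇑κ : R) *
            ∏ i ∈ Finset.Icc 1 n, (coeff i f) ^ κ i) := by ring
end

section
/- Let R be a commutative ring and f ∈ R⟦x⟧ a formal power series in one variable. Then there exists a unique two-variable formal power series u ∈ R⟦t,x⟧ satisfying u = f(x + t·u), where f(x + t·u) denotes the substitution of the series x + t·u (which has zero constant coefficient) into f. -/
/-- Substitution of a two-variable formal power series `w` (intended to have zero
constant coefficient) into a one-variable formal power series `f`: the coefficient of
the monomial `m` in `f(w)` is `∑_{n ≤ |m|} (coeff n f) · (coeff m (w^n))`, where `|m|`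
is the total degree of `m`. -/
noncomputable def substTwoVar {R : Type*} [CommRing R] (f : PowerSeries R)
    (w : MvPowerSeries (Fin 2) R) : MvPowerSeries (Fin 2) R :=
  fun m => ∑ n ∈ Finset.range ((m.sum fun _ e => e) + 1),
    PowerSeries.coeff n f * MvPowerSeries.coeff m (w ^ n)

/-!
The map `Φ u = f(x + t·u)` is a contraction for the `t`-adic filtration: if `u ≡ v` modulo
`t^N` then `x + t·u ≡ x + t·v` modulo `t^(N+1)`, and so are all their powers and hence their
substitutions into `f`. Uniqueness follows since `u - v` is then divisible by every power of
`t`; existence by the `t`-adic convergence of the iterates `Φⁿ 0`.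
-/

namespace MvPowerSeries

variable {σ R : Type*} [CommRing R] {i : σ}

theorem eq_of_forall_X_pow_dvd_sub {u v : MvPowerSeries σ R}
    (h : ∀ N, X i ^ N ∣ u - v) : u = v := by
  ext m
  rw [← sub_eq_zero, ← map_sub]
  exact X_pow_dvd_iff.mp (h (m i + 1)) m (Nat.lt_succ_self _)

theorem exists_forall_X_pow_dvd_sub_of_cauchy (s : ℕ → MvPowerSeries σ R)
    (hs : ∀ n k, X i ^ n ∣ s (n + k) - s n) : ∃ L, ∀ n, X i ^ n ∣ L - s n := by
  let L : MvPowerSeries σ R := fun m => coeff m (s (m i + 1))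
  have coeff_L (m : σ →₀ ℕ) : coeff m L = coeff m (s (m i + 1)) := rfl
  refine ⟨L, fun n => X_pow_dvd_iff.mpr fun m hm => ?_⟩
  obtain ⟨k, rfl⟩ := Nat.exists_eq_add_of_le hm
  have h := X_pow_dvd_iff.mp (hs (m i + 1) k) m (Nat.lt_succ_self _)
  rw [map_sub, sub_eq_zero] at h ⊢
  rw [coeff_L, h]

theorem existsUnique_eq_of_X_pow_dvd_sub (Φ : MvPowerSeries σ R → MvPowerSeries σ R)
    (hΦ : ∀ N u v, X i ^ N ∣ u - v → X i ^ (N + 1) ∣ Φ u - Φ v) : ∃! u, u = Φ u := by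
  have hiter : ∀ n k, X i ^ n ∣ Φ^[n + k] 0 - Φ^[n] 0 := by
    intro n k
    induction n with
    | zero => simp
    | succ n ih =>
      rw [Nat.add_right_comm, Function.iterate_succ_apply', Function.iterate_succ_apply']
      exact hΦ n _ _ ih
  obtain ⟨L, hL⟩ := exists_forall_X_pow_dvd_sub_of_cauchy (fun n => Φ^[n] 0) hiter
  have hLfix : L = Φ L := eq_of_forall_X_pow_dvd_sub (i := i) fun N => by
    have hΦL : X i ^ (N + 1) ∣ Φ^[N + 1] 0 - Φ L := by
      rw [Function.iterate_succ_apply', ← neg_sub, dvd_neg]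
      exact hΦ N _ _ (hL N)
    have := dvd_add (hL (N + 1)) hΦL
    rw [sub_add_sub_cancel] at this
    exact (pow_dvd_pow _ N.le_succ).trans this
  refine ⟨L, hLfix, fun v hv => eq_of_forall_X_pow_dvd_sub (i := i) fun N => ?_⟩
  induction N with
  | zero => simp
  | succ N ih =>
    have := hΦ N v L ih
    rwa [← hv, ← hLfix] at this

end MvPowerSeries

section substTwoVar

open MvPowerSeries

variable {R : Type*} [CommRing R]

theorem coeff_substTwoVar (f : PowerSeries R) (w : MvPowerSeries (Fin 2) R) (m : Fin 2 →₀ ℕ) :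
    coeff m (substTwoVar f w) =
      ∑ n ∈ Finset.range ((m.sum fun _ e => e) + 1), PowerSeries.coeff n f * coeff m (w ^ n) :=
  rfl

theorem X_pow_dvd_substTwoVar_sub (f : PowerSeries R) {j : Fin 2} {N : ℕ}
    {w w' : MvPowerSeries (Fin 2) R} (h : X j ^ N ∣ w - w') :
    X j ^ N ∣ substTwoVar f w - substTwoVar f w' := by
  refine X_pow_dvd_iff.mpr fun m hm => ?_
  rw [map_sub, sub_eq_zero, coeff_substTwoVar, coeff_substTwoVar]
  refine Finset.sum_congr rfl fun n _ => ?_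
  have hpow := X_pow_dvd_iff.mp (h.trans (sub_dvd_pow_sub_pow w w' n)) m hm
  rw [map_sub, sub_eq_zero] at hpow
  rw [hpow]

end substTwoVar

/-- For any formal power series `f ∈ R⟦x⟧` there is a unique
two-variable formal power series `u ∈ R⟦t,x⟧` (here `t = X 0`, `x = X 1`) satisfying
`u = f(x + t·u)`. -/
theorem statement7 {R : Type*} [CommRing R] (f : PowerSeries R) :
    ∃! u : MvPowerSeries (Fin 2) R,
      u = substTwoVar f (MvPowerSeries.X 1 + MvPowerSeries.X 0 * u) := by
  refine MvPowerSeries.existsUnique_eq_of_X_pow_dvd_sub (i := 0) _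
    fun N u v h => X_pow_dvd_substTwoVar_sub f ?_
  rw [add_sub_add_left_eq_sub, ← mul_sub, pow_succ']
  exact mul_dvd_mul_left _ h
end

section
/- Let R be a commutative ring, f ∈ R⟦x⟧, and suppose u ∈ R⟦t,x⟧ satisfies u = f(x + t·u). Then u satisfies the Hopf equation ∂u/∂t = u · ∂u/∂x, and substituting t = 0 into u yields f(x). -/
/-- The formal partial derivative of a two-variable formal power series with respect
to the `i`-th variable. -/
noncomputable def pderivTwoVar {R : Type*} [CommRing R] (i : Fin 2)
    (f : MvPowerSeries (Fin 2) R) : MvPowerSeries (Fin 2) R :=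
  fun m => ((m i + 1 : ℕ) : R) * MvPowerSeries.coeff (m + Finsupp.single i 1) f

/-!
Write `w = x + t·u` and `E = f'(w)`. The chain rule gives `∂ₜu = E·(u + t·∂ₜu)` and
`∂ₓu = E·(1 + t·∂ₓu)`, so `(1 - t·E)·(∂ₜu - u·∂ₓu) = E·u - u·E = 0`, and `1 - t·E` is a
unit. Setting `t = 0` replaces `w` by `x`: `t` divides `w - x`, hence every `wⁿ - xⁿ`, and
coefficients free of `t` do not see multiples of `t`.
-/

namespace MvPowerSeries

variable {σ R : Type*} [CommRing R]

theorem coeff_pow_eq_zero_of_degree_lt {w : MvPowerSeries σ R} (hw : constantCoeff w = 0)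
    {n : ℕ} {m : σ →₀ ℕ} (hm : m.degree < n) : coeff m (w ^ n) = 0 :=
  coeff_of_lt_order <| (Nat.cast_lt.mpr hm).trans_le (le_order_pow_of_constantCoeff_eq_zero n hw)

theorem pderivTwoVar_eq_pderiv (i : Fin 2) (φ : MvPowerSeries (Fin 2) R) :
    pderivTwoVar i φ = pderiv R i φ := by
  ext m
  show ((m i + 1 : ℕ) : R) * _ = _
  rw [coeff_pderiv, Nat.cast_succ, mul_comm]

end MvPowerSeries

namespace PowerSeries

open MvPowerSeries (pderiv coeff_pow_eq_zero_of_degree_lt)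

variable {σ R : Type*} [CommRing R]

theorem substTwoVar_eq_subst (f : R⟦X⟧) {w : MvPowerSeries (Fin 2) R}
    (hw : MvPowerSeries.constantCoeff w = 0) : substTwoVar f w = f.subst w := by
  ext m
  rw [coeff_subst (HasSubst.of_constantCoeff_zero hw),
    finsum_eq_sum_of_support_subset (s := Finset.range (m.degree + 1))]
  · rfl
  · refine Function.support_subset_iff'.mpr fun n hn => ?_
    rw [Finset.coe_range, Set.mem_Iio, not_lt, Nat.succ_le_iff] at hn
    rw [coeff_pow_eq_zero_of_degree_lt hw hn, smul_zero]

theorem coeff_subst_trunc_of_degree_lt {a : MvPowerSeries σ R}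
    (ha : MvPowerSeries.constantCoeff a = 0) (f : R⟦X⟧) {N : ℕ} {m : σ →₀ ℕ}
    (hm : m.degree < N) :
    MvPowerSeries.coeff m ((trunc N f : R⟦X⟧).subst a) = MvPowerSeries.coeff m (f.subst a) := by
  have ha' := HasSubst.of_constantCoeff_zero ha
  rw [coeff_subst ha', coeff_subst ha']
  refine finsum_congr fun n => ?_
  rw [Polynomial.coeff_coe, coeff_trunc]
  split_ifs with hn
  · rfl
  · rw [coeff_pow_eq_zero_of_degree_lt ha (hm.trans_le (not_lt.mp hn)), smul_zero, smul_zero]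

theorem pderiv_subst_coe {a : MvPowerSeries σ R} (ha : HasSubst a) (p : Polynomial R) (i : σ) :
    pderiv R i ((p : R⟦X⟧).subst a)
      = (Polynomial.derivative p : R⟦X⟧).subst a * pderiv R i a := by
  rw [subst_coe ha, subst_coe ha, Derivation.comp_aeval_eq, smul_eq_mul]

/-- Truncating `f` at `N` changes no coefficient of degree `< N`; this reduces the chain rule to
the polynomial case. -/
theorem pderiv_subst {a : MvPowerSeries σ R} (ha : MvPowerSeries.constantCoeff a = 0)
    (f : R⟦X⟧) (i : σ) :
    pderiv R i (f.subst a) = (d⁄dX R f).subst a * pderiv R i a := by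
  classical
  ext m
  set N := m.degree + 2
  have hm : (m + Finsupp.single i 1).degree < N := by simp [N]
  rw [MvPowerSeries.coeff_pderiv, ← coeff_subst_trunc_of_degree_lt ha f hm,
    ← MvPowerSeries.coeff_pderiv, pderiv_subst_coe (HasSubst.of_constantCoeff_zero ha),
    ← trunc_derivative', MvPowerSeries.coeff_mul, MvPowerSeries.coeff_mul]
  refine Finset.sum_congr rfl fun pq hpq => ?_
  have hdeg : pq.1.degree < N - 1 := by
    rw [Finset.HasAntidiagonal.mem_antidiagonal] at hpq
    have := congrArg Finsupp.degree hpq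
    rw [map_add] at this
    omega
  rw [coeff_subst_trunc_of_degree_lt ha _ hdeg]

theorem coeff_subst_eq_of_X_dvd_sub {a b : MvPowerSeries σ R} (ha : HasSubst a) (hb : HasSubst b)
    {i : σ} (hab : MvPowerSeries.X i ∣ a - b) (f : R⟦X⟧) {m : σ →₀ ℕ} (hm : m i = 0) :
    MvPowerSeries.coeff m (f.subst a) = MvPowerSeries.coeff m (f.subst b) := by
  rw [coeff_subst ha, coeff_subst hb]
  refine finsum_congr fun n => congrArg _ (sub_eq_zero.mp ?_)
  rw [← map_sub]
  exact MvPowerSeries.X_dvd_iff.mp (hab.trans (sub_dvd_pow_sub_pow a b n)) m hm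

end PowerSeries

namespace MvPowerSeries

open scoped PowerSeries
open PowerSeries (pderiv_subst coeff_subst_eq_of_X_dvd_sub)

variable {σ R : Type*} [CommRing R]

theorem pderiv_eq_mul_pderiv_of_eq_subst {i j : σ} (hij : i ≠ j) (f : R⟦X⟧)
    {u : MvPowerSeries σ R} (hu : u = f.subst (X j + X i * u)) :
    pderiv R i u = u * pderiv R j u := by
  have hw : constantCoeff (X j + X i * u) = 0 := by simp
  have chain (k : σ) :
      pderiv R k u = (d⁄dX R f).subst (X j + X i * u) * pderiv R k (X j + X i * u) := by
    conv_lhs => rw [hu]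
    exact pderiv_subst hw f k
  generalize (d⁄dX R f).subst (X j + X i * u) = E at chain
  have hi := chain i
  have hj := chain j
  simp only [map_add, Derivation.leibniz, smul_eq_mul, pderiv_X_self, pderiv_X_of_ne hij,
    pderiv_X_of_ne hij.symm] at hi hj
  have hunit : IsUnit (1 - X i * E) := isUnit_iff_constantCoeff.mpr (by simp)
  refine sub_eq_zero.mp (hunit.mul_right_eq_zero.mp ?_)
  linear_combination hi - u * hj

theorem coeff_eq_coeff_subst_X_of_eq_subst {i j : σ} (f : R⟦X⟧) {u : MvPowerSeries σ R}
    (hu : u = f.subst (X j + X i * u)) {m : σ →₀ ℕ} (hm : m i = 0) :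
    coeff m u = coeff m (f.subst (X j)) := by
  have hw : constantCoeff (X j + X i * u) = 0 := by simp
  rw [hu]
  exact coeff_subst_eq_of_X_dvd_sub (.of_constantCoeff_zero hw) (PowerSeries.HasSubst.X j)
    ⟨u, add_sub_cancel_left _ _⟩ f hm

end MvPowerSeries

open PowerSeries MvPowerSeries in
/-- If `u ∈ R⟦t,x⟧` (here `t = X 0`, `x = X 1`) satisfies
`u = f(x + t·u)`, then `u` satisfies the Hopf equation `∂u/∂t = u · ∂u/∂x`, and
substituting `t = 0` into `u` yields `f(x)`. -/
theorem statement8 {R : Type*} [CommRing R] (f : PowerSeries R)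
    (u : MvPowerSeries (Fin 2) R)
    (hu : u = substTwoVar f (MvPowerSeries.X 1 + MvPowerSeries.X 0 * u)) :
    pderivTwoVar 0 u = u * pderivTwoVar 1 u ∧
      ∀ m : Fin 2 →₀ ℕ, m 0 = 0 →
        MvPowerSeries.coeff m u = PowerSeries.coeff (m 1) f := by
  rw [substTwoVar_eq_subst f (by simp)] at hu
  refine ⟨?_, fun m hm => ?_⟩
  · rw [pderivTwoVar_eq_pderiv, pderivTwoVar_eq_pderiv]
    exact pderiv_eq_mul_pderiv_of_eq_subst (by decide) f hu
  · have hm_single : m = Finsupp.single 1 (m 1) := by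
      ext k
      fin_cases k <;> simp [hm]
    rw [coeff_eq_coeff_subst_X_of_eq_subst f hu hm, coeff_subst_single, if_pos hm_single]
end

section
/- Let R be a commutative ring, f, g ∈ R⟦x⟧, and suppose u, v ∈ R⟦t,x⟧ satisfy u = f(x + t·u) and v = g(x + t·u). Then v satisfies the linear transport equation ∂v/∂t = u · ∂v/∂x. -/
namespace Stmt9

open MvPowerSeries

variable {R : Type*} [CommRing R]

local notation "M" => MvPowerSeries (Fin 2) R

def deg (m : Fin 2 →₀ ℕ) : ℕ := m.sum fun _ e => e

lemma deg_add (p q : Fin 2 →₀ ℕ) : deg (p + q) = deg p + deg q :=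
  Finsupp.sum_add_index' (fun _ => rfl) (fun _ _ _ => rfl)

lemma apply_le_deg (m : Fin 2 →₀ ℕ) (a : Fin 2) : m a ≤ deg m := by
  by_cases h : m a = 0
  · simp [h]
  · exact Finset.single_le_sum (fun _ _ => Nat.zero_le _) (Finsupp.mem_support_iff.2 h)

lemma one_le_deg {m : Fin 2 →₀ ℕ} (h : m ≠ 0) : 1 ≤ deg m := by
  obtain ⟨a, ha⟩ := Finsupp.ne_iff.mp h
  simp only [Finsupp.coe_zero, Pi.zero_apply] at ha
  calc 1 ≤ m a := Nat.one_le_iff_ne_zero.2 ha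
  _ ≤ deg m := apply_le_deg m a

lemma coeff_pderiv (i : Fin 2) (f : M) (m : Fin 2 →₀ ℕ) :
    MvPowerSeries.coeff m (pderivTwoVar i f) =
      ((m i + 1 : ℕ) : R) * MvPowerSeries.coeff (m + Finsupp.single i 1) f := rfl

lemma pderiv_add (i : Fin 2) (a b : M) :
    pderivTwoVar i (a + b) = pderivTwoVar i a + pderivTwoVar i b := by
  apply MvPowerSeries.ext; intro m
  simp [coeff_pderiv, map_add, mul_add]

lemma sub_single_add_single {i : Fin 2} {p : Fin 2 →₀ ℕ} (hp : p i ≠ 0) :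
    p - Finsupp.single i 1 + Finsupp.single i 1 = p :=
  tsub_add_cancel_of_le (Finsupp.single_le_iff.2 (by omega))

lemma sub_single_apply {i : Fin 2} {p : Fin 2 →₀ ℕ} (hp : p i ≠ 0) :
    (p - Finsupp.single i 1 : Fin 2 →₀ ℕ) i + 1 = p i := by
  rw [Finsupp.tsub_apply, Finsupp.single_eq_same]
  omega

lemma key1 (i : Fin 2) (a b : M) (m : Fin 2 →₀ ℕ) :
    ∑ x ∈ Finset.HasAntidiagonal.antidiagonal (m + Finsupp.single i 1 : Fin 2 →₀ ℕ),
        ((x.1 i : ℕ) : R) * (MvPowerSeries.coeff x.1 a * MvPowerSeries.coeff x.2 b)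
    = ∑ x ∈ Finset.HasAntidiagonal.antidiagonal m,
        ((x.1 i + 1 : ℕ) : R) *
          (MvPowerSeries.coeff (x.1 + Finsupp.single i 1) a *
            MvPowerSeries.coeff x.2 b) := by
  classical
  have h0 : ∀ x ∈ Finset.HasAntidiagonal.antidiagonal (m + Finsupp.single i 1 : Fin 2 →₀ ℕ),
      ((x.1 i : ℕ) : R) * (MvPowerSeries.coeff x.1 a * MvPowerSeries.coeff x.2 b) ≠ 0 →
        x.1 i ≠ 0 := by
    intro x _ hx h'
    exact hx (by rw [h', Nat.cast_zero, zero_mul])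
  rw [← Finset.sum_filter_of_ne h0]
  refine Finset.sum_nbij' (fun x => (x.1 - Finsupp.single i 1, x.2))
    (fun x => (x.1 + Finsupp.single i 1, x.2)) ?_ ?_ ?_ ?_ ?_
  · rintro ⟨p, q⟩ hx
    simp only [Finset.mem_filter, Finset.HasAntidiagonal.mem_antidiagonal] at hx ⊢
    obtain ⟨hpq, hpi⟩ := hx
    have : (p - Finsupp.single i 1 + q) + Finsupp.single i 1 = m + Finsupp.single i 1 := by
      rw [add_right_comm, sub_single_add_single hpi, hpq]
    exact add_right_cancel this
  · rintro ⟨p, q⟩ hx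
    simp only [Finset.HasAntidiagonal.mem_antidiagonal] at hx
    simp only [Finset.mem_filter, Finset.HasAntidiagonal.mem_antidiagonal]
    refine ⟨by rw [add_right_comm, hx], ?_⟩
    simp only [Finsupp.add_apply, Finsupp.single_eq_same]
    omega
  · rintro ⟨p, q⟩ hx
    simp only [Finset.mem_filter, Finset.HasAntidiagonal.mem_antidiagonal] at hx
    obtain ⟨_, hpi⟩ := hx
    simp only [Prod.mk.injEq]
    exact ⟨sub_single_add_single hpi, trivial⟩
  · rintro ⟨p, q⟩ _
    simp only [Prod.mk.injEq]
    exact ⟨add_tsub_cancel_right _ _, trivial⟩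
  · rintro ⟨p, q⟩ hx
    simp only [Finset.mem_filter, Finset.HasAntidiagonal.mem_antidiagonal] at hx
    obtain ⟨_, hpi⟩ := hx
    simp only [sub_single_add_single hpi, sub_single_apply hpi]

lemma sum_antidiagonal_swap (n : Fin 2 →₀ ℕ)
    (F : (Fin 2 →₀ ℕ) × (Fin 2 →₀ ℕ) → R) :
    ∑ x ∈ Finset.HasAntidiagonal.antidiagonal n, F x = ∑ x ∈ Finset.HasAntidiagonal.antidiagonal n, F x.swap := by
  refine Finset.sum_nbij' Prod.swap Prod.swap ?_ ?_ ?_ ?_ ?_ <;>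
    simp [Finset.HasAntidiagonal.mem_antidiagonal, add_comm]

lemma key2 (i : Fin 2) (a b : M) (m : Fin 2 →₀ ℕ) :
    ∑ x ∈ Finset.HasAntidiagonal.antidiagonal (m + Finsupp.single i 1 : Fin 2 →₀ ℕ),
        ((x.2 i : ℕ) : R) * (MvPowerSeries.coeff x.1 a * MvPowerSeries.coeff x.2 b)
    = ∑ x ∈ Finset.HasAntidiagonal.antidiagonal m,
        ((x.2 i + 1 : ℕ) : R) *
          (MvPowerSeries.coeff x.1 a *
            MvPowerSeries.coeff (x.2 + Finsupp.single i 1) b) := by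
  rw [sum_antidiagonal_swap (m + Finsupp.single i 1),
    sum_antidiagonal_swap m
      (fun x => ((x.2 i + 1 : ℕ) : R) *
        (MvPowerSeries.coeff x.1 a * MvPowerSeries.coeff (x.2 + Finsupp.single i 1) b))]
  simp only [Prod.fst_swap, Prod.snd_swap]
  have := key1 i b a m
  calc ∑ x ∈ Finset.HasAntidiagonal.antidiagonal (m + Finsupp.single i 1 : Fin 2 →₀ ℕ),
        ((x.1 i : ℕ) : R) * (MvPowerSeries.coeff x.2 a * MvPowerSeries.coeff x.1 b)
      = ∑ x ∈ Finset.HasAntidiagonal.antidiagonal (m + Finsupp.single i 1 : Fin 2 →₀ ℕ),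
        ((x.1 i : ℕ) : R) * (MvPowerSeries.coeff x.1 b * MvPowerSeries.coeff x.2 a) := by
        apply Finset.sum_congr rfl; intros; ring
    _ = ∑ x ∈ Finset.HasAntidiagonal.antidiagonal m,
        ((x.1 i + 1 : ℕ) : R) *
          (MvPowerSeries.coeff (x.1 + Finsupp.single i 1) b *
            MvPowerSeries.coeff x.2 a) := key1 i b a m
    _ = ∑ x ∈ Finset.HasAntidiagonal.antidiagonal m,
        ((x.1 i + 1 : ℕ) : R) *
          (MvPowerSeries.coeff x.2 a *
            MvPowerSeries.coeff (x.1 + Finsupp.single i 1) b) := by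
        apply Finset.sum_congr rfl; intros; ring

lemma pderiv_mul (i : Fin 2) (a b : M) :
    pderivTwoVar i (a * b) = pderivTwoVar i a * b + a * pderivTwoVar i b := by
  classical
  apply MvPowerSeries.ext; intro m
  rw [map_add, coeff_pderiv, MvPowerSeries.coeff_mul, MvPowerSeries.coeff_mul,
    MvPowerSeries.coeff_mul, Finset.mul_sum]
  have step1 : ∀ x ∈ Finset.HasAntidiagonal.antidiagonal (m + Finsupp.single i 1 : Fin 2 →₀ ℕ),
      ((m i + 1 : ℕ) : R) * (MvPowerSeries.coeff x.1 a * MvPowerSeries.coeff x.2 b)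
      = ((x.1 i : ℕ) : R) * (MvPowerSeries.coeff x.1 a * MvPowerSeries.coeff x.2 b)
        + ((x.2 i : ℕ) : R) * (MvPowerSeries.coeff x.1 a * MvPowerSeries.coeff x.2 b) := by
    intro x hx
    have hx' := Finset.HasAntidiagonal.mem_antidiagonal.mp hx
    have : x.1 i + x.2 i = m i + 1 := by
      have := DFunLike.congr_fun hx' i
      simpa [Finsupp.add_apply, Finsupp.single_eq_same] using this
    rw [← add_mul, ← Nat.cast_add, this]
  rw [Finset.sum_congr rfl step1, Finset.sum_add_distrib, key1, key2]
  congr 1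
  · apply Finset.sum_congr rfl
    intro x _
    rw [coeff_pderiv]
    ring
  · apply Finset.sum_congr rfl
    intro x _
    rw [coeff_pderiv]
    ring

lemma pderiv_one (i : Fin 2) : pderivTwoVar i (1 : M) = 0 := by
  classical
  apply MvPowerSeries.ext; intro m
  rw [coeff_pderiv, MvPowerSeries.coeff_one, map_zero]
  rw [if_neg, mul_zero]
  intro h
  have := DFunLike.congr_fun h i
  simp [Finsupp.add_apply, Finsupp.single_eq_same] at this

lemma pderiv_pow (i : Fin 2) (w : M) (n : ℕ) :
    pderivTwoVar i (w ^ (n + 1)) = (n + 1) • (w ^ n * pderivTwoVar i w) := by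
  induction n with
  | zero => simp [pderiv_mul]
  | succ n ih =>
    rw [pow_succ, pderiv_mul, ih, succ_nsmul ((w ^ (n + 1)) * pderivTwoVar i w) (n + 1),
      smul_mul_assoc,
      show w ^ n * pderivTwoVar i w * w = w ^ (n + 1) * pderivTwoVar i w from by ring]

lemma pderiv_X (i j : Fin 2) :
    pderivTwoVar i (MvPowerSeries.X j : M) = if j = i then 1 else 0 := by
  classical
  apply MvPowerSeries.ext; intro m
  rw [coeff_pderiv, MvPowerSeries.coeff_X]
  rcases eq_or_ne j i with rfl | hij
  · rw [if_pos rfl]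
    rcases eq_or_ne m 0 with rfl | hm
    · simp [MvPowerSeries.coeff_one]
    · rw [if_neg, MvPowerSeries.coeff_one, if_neg hm, mul_zero]
      intro h
      apply hm
      have : m + Finsupp.single j 1 = 0 + Finsupp.single j 1 := by rw [zero_add, h]
      exact add_right_cancel this
  · rw [if_neg hij, if_neg, mul_zero, map_zero]
    intro h
    have := DFunLike.congr_fun h i
    simp [Finsupp.add_apply, Finsupp.single_eq_same,
      Finsupp.single_eq_of_ne hij.symm] at this

lemma coeff_pow_eq_zero {w : M} (hw : MvPowerSeries.constantCoeff w = 0) :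
    ∀ (n : ℕ) (m : Fin 2 →₀ ℕ), deg m < n → MvPowerSeries.coeff m (w ^ n) = 0 := by
  classical
  intro n
  induction n with
  | zero => intro m hm; omega
  | succ n ih =>
    intro m hm
    rw [pow_succ', MvPowerSeries.coeff_mul]
    apply Finset.sum_eq_zero
    rintro ⟨p, q⟩ hx
    have hx' := Finset.HasAntidiagonal.mem_antidiagonal.mp hx
    rcases eq_or_ne p 0 with rfl | hp
    · rw [MvPowerSeries.coeff_zero_eq_constantCoeff_apply, hw, zero_mul]
    · have h1 : 1 ≤ deg p := one_le_deg hp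
      have h2 : deg p + deg q = deg m := by rw [← deg_add, hx']
      rw [ih q (by omega), mul_zero]

lemma coeff_subst (f : PowerSeries R) {w : M}
    (hw : MvPowerSeries.constantCoeff w = 0)
    (m : Fin 2 →₀ ℕ) {N : ℕ} (hN : deg m < N) :
    MvPowerSeries.coeff m (substTwoVar f w)
      = ∑ n ∈ Finset.range N, PowerSeries.coeff n f * MvPowerSeries.coeff m (w ^ n) := by
  have h : MvPowerSeries.coeff m (substTwoVar f w)
      = ∑ n ∈ Finset.range (deg m + 1),
          PowerSeries.coeff n f * MvPowerSeries.coeff m (w ^ n) := rfl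
  rw [h]
  apply Finset.sum_subset
  · intro x hx
    simp only [Finset.mem_range] at hx ⊢
    omega
  · intro x _ hnx
    simp only [Finset.mem_range] at hnx
    rw [coeff_pow_eq_zero hw x m (by omega), mul_zero]

lemma deg_single (i : Fin 2) : deg (Finsupp.single i 1) = 1 :=
  Finsupp.sum_single_index rfl

lemma pderiv_subst (f : PowerSeries R) {w : M}
    (hw : MvPowerSeries.constantCoeff w = 0) (i : Fin 2) :
    pderivTwoVar i (substTwoVar f w)
      = substTwoVar (PowerSeries.derivative R f) w * pderivTwoVar i w := by
  classical
  apply MvPowerSeries.ext; intro m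
  set N := deg m + 1 with hNdef
  have hdm : deg (m + Finsupp.single i 1) = deg m + 1 := by
    rw [deg_add, deg_single]
  rw [coeff_pderiv, coeff_subst f hw _ (N := N + 1) (by omega), Finset.mul_sum,
    MvPowerSeries.coeff_mul]
  have hR : ∀ x ∈ Finset.HasAntidiagonal.antidiagonal m,
      MvPowerSeries.coeff x.1 (substTwoVar (PowerSeries.derivative R f) w) *
        MvPowerSeries.coeff x.2 (pderivTwoVar i w)
      = ∑ k ∈ Finset.range N, PowerSeries.coeff k (PowerSeries.derivative R f) *
          (MvPowerSeries.coeff x.1 (w ^ k) *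
            MvPowerSeries.coeff x.2 (pderivTwoVar i w)) := by
    intro x hx
    have hx' := Finset.HasAntidiagonal.mem_antidiagonal.mp hx
    have hdx : deg x.1 ≤ deg m := by
      have := deg_add x.1 x.2
      rw [hx'] at this
      omega
    rw [coeff_subst _ hw x.1 (N := N) (by omega), Finset.sum_mul]
    apply Finset.sum_congr rfl
    intros
    ring
  rw [Finset.sum_congr rfl hR, Finset.sum_comm, Finset.sum_range_succ']
  have h0 : ((m i + 1 : ℕ) : R) * (PowerSeries.coeff 0 f *
      MvPowerSeries.coeff (m + Finsupp.single i 1) (w ^ 0)) = 0 := by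
    rw [pow_zero, MvPowerSeries.coeff_one, if_neg, mul_zero, mul_zero]
    intro h
    have := DFunLike.congr_fun h i
    simp [Finsupp.add_apply, Finsupp.single_eq_same] at this
  rw [h0, add_zero]
  apply Finset.sum_congr rfl
  intro k _
  have hc : ((m i + 1 : ℕ) : R) *
      MvPowerSeries.coeff (m + Finsupp.single i 1) (w ^ (k + 1))
      = ((k + 1 : ℕ) : R) * MvPowerSeries.coeff m (w ^ k * pderivTwoVar i w) := by
    rw [← coeff_pderiv, pderiv_pow, map_nsmul, nsmul_eq_mul]
  rw [MvPowerSeries.coeff_mul] at hc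
  calc ((m i + 1 : ℕ) : R) * (PowerSeries.coeff (k + 1) f *
        MvPowerSeries.coeff (m + Finsupp.single i 1) (w ^ (k + 1)))
      = PowerSeries.coeff (k + 1) f * (((m i + 1 : ℕ) : R) *
          MvPowerSeries.coeff (m + Finsupp.single i 1) (w ^ (k + 1))) := by ring
    _ = PowerSeries.coeff (k + 1) f * (((k + 1 : ℕ) : R) *
          ∑ x ∈ Finset.HasAntidiagonal.antidiagonal m, MvPowerSeries.coeff x.1 (w ^ k) *
            MvPowerSeries.coeff x.2 (pderivTwoVar i w)) := by rw [hc]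
    _ = ∑ x ∈ Finset.HasAntidiagonal.antidiagonal m,
          PowerSeries.coeff k (PowerSeries.derivative R f) *
            (MvPowerSeries.coeff x.1 (w ^ k) *
              MvPowerSeries.coeff x.2 (pderivTwoVar i w)) := by
        rw [PowerSeries.coeff_derivative, Finset.mul_sum, Finset.mul_sum]
        apply Finset.sum_congr rfl
        intros
        push_cast
        ring

lemma eq_zero_of_eq_mul {z D : M}
    (hz : MvPowerSeries.constantCoeff z = 0) (h : D = z * D) : D = 0 := by
  classical
  apply MvPowerSeries.ext; intro m
  rw [map_zero]
  suffices H : ∀ k (m : Fin 2 →₀ ℕ), deg m = k → MvPowerSeries.coeff m D = 0 from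
    H (deg m) m rfl
  intro k
  induction k using Nat.strong_induction_on with
  | _ k ih =>
    intro m hm
    conv_lhs => rw [h]
    rw [MvPowerSeries.coeff_mul]
    apply Finset.sum_eq_zero
    rintro ⟨p, q⟩ hx
    have hx' := Finset.HasAntidiagonal.mem_antidiagonal.mp hx
    rcases eq_or_ne p 0 with rfl | hp
    · rw [MvPowerSeries.coeff_zero_eq_constantCoeff_apply, hz, zero_mul]
    · have h1 : 1 ≤ deg p := one_le_deg hp
      have h2 : deg p + deg q = deg m := by rw [← deg_add, hx']
      rw [ih (deg q) (by omega) q rfl, mul_zero]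

end Stmt9


/-- If `u, v ∈ R⟦t,x⟧` (here `t = X 0`, `x = X 1`) satisfy
`u = f(x + t·u)` and `v = g(x + t·u)`, then `v` satisfies the linear transport
equation `∂v/∂t = u · ∂v/∂x`. -/
theorem statement9 {R : Type*} [CommRing R] (f g : PowerSeries R)
    (u v : MvPowerSeries (Fin 2) R)
    (hu : u = substTwoVar f (MvPowerSeries.X 1 + MvPowerSeries.X 0 * u))
    (hv : v = substTwoVar g (MvPowerSeries.X 1 + MvPowerSeries.X 0 * u)) :
    pderivTwoVar 0 v = u * pderivTwoVar 1 v := by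
  classical
  open Stmt9 in
  set w : MvPowerSeries (Fin 2) R := MvPowerSeries.X 1 + MvPowerSeries.X 0 * u with hwdef
  have hw : MvPowerSeries.constantCoeff w = 0 := by
    rw [hwdef, map_add, map_mul, MvPowerSeries.constantCoeff_X, MvPowerSeries.constantCoeff_X,
      zero_mul, add_zero]
  set A := substTwoVar (PowerSeries.derivative R f) w with hA
  set B := substTwoVar (PowerSeries.derivative R g) w with hB
  have hdw0 : pderivTwoVar 0 w = u + MvPowerSeries.X 0 * pderivTwoVar 0 u := by
    rw [hwdef, Stmt9.pderiv_add, Stmt9.pderiv_mul, Stmt9.pderiv_X, Stmt9.pderiv_X,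
      if_neg (show (1 : Fin 2) ≠ 0 by decide), if_pos rfl, zero_add, one_mul]
  have hdw1 : pderivTwoVar 1 w = 1 + MvPowerSeries.X 0 * pderivTwoVar 1 u := by
    rw [hwdef, Stmt9.pderiv_add, Stmt9.pderiv_mul, Stmt9.pderiv_X, Stmt9.pderiv_X,
      if_pos rfl, if_neg (show (0 : Fin 2) ≠ 1 by decide), zero_mul, zero_add]
  have hu0 : pderivTwoVar 0 u = A * (u + MvPowerSeries.X 0 * pderivTwoVar 0 u) := by
    conv_lhs => rw [hu]
    rw [Stmt9.pderiv_subst f hw 0, hdw0, hA]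
  have hu1 : pderivTwoVar 1 u = A * (1 + MvPowerSeries.X 0 * pderivTwoVar 1 u) := by
    conv_lhs => rw [hu]
    rw [Stmt9.pderiv_subst f hw 1, hdw1, hA]
  have hv0 : pderivTwoVar 0 v = B * (u + MvPowerSeries.X 0 * pderivTwoVar 0 u) := by
    conv_lhs => rw [hv]
    rw [Stmt9.pderiv_subst g hw 0, hdw0, hB]
  have hv1 : pderivTwoVar 1 v = B * (1 + MvPowerSeries.X 0 * pderivTwoVar 1 u) := by
    conv_lhs => rw [hv]
    rw [Stmt9.pderiv_subst g hw 1, hdw1, hB]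
  have hD : pderivTwoVar 0 u - u * pderivTwoVar 1 u
      = (MvPowerSeries.X 0 * A) * (pderivTwoVar 0 u - u * pderivTwoVar 1 u) := by
    linear_combination hu0 - u * hu1
  have hDzero : pderivTwoVar 0 u - u * pderivTwoVar 1 u = 0 := by
    refine Stmt9.eq_zero_of_eq_mul ?_ hD
    rw [map_mul, MvPowerSeries.constantCoeff_X, zero_mul]
  have hfinal : pderivTwoVar 0 v - u * pderivTwoVar 1 v
      = (MvPowerSeries.X 0 * B) * (pderivTwoVar 0 u - u * pderivTwoVar 1 u) := by
    linear_combination hv0 - u * hv1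
  rw [hDzero, mul_zero] at hfinal
  exact sub_eq_zero.mp hfinal
end

section
/- Let R be a commutative ring, and let f = Σ_{n≥1} a_n Xⁿ and g = Σ_{n≥1} b_n Xⁿ be formal power series in R⟦X⟧ with zero constant coefficient. Write the composition f(g(X)) = Σ_{n≥1} c_n Xⁿ. Then for every n ≥ 1 (Faà di Bruno's formula): c_n = Σ (k!/(k_1! k_2! ⋯ k_n!)) · a_k · b_1^{k_1} b_2^{k_2} ⋯ b_n^{k_n}, where the sum is over all tuples (k_1, …, k_n) of nonnegative integers with k_1 + 2k_2 + ⋯ + n·k_n = n, and k = k_1 + ⋯ + k_n; here k!/(k_1!⋯k_n!) is the (integer) multinomial coefficient. -/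
open PowerSeries

/-- **Faà di Bruno's formula.** If `f = ∑_{n ≥ 1} a_n Xⁿ` and
`g = ∑_{n ≥ 1} b_n Xⁿ` have zero constant coefficient and `f(g(X)) = ∑_{n ≥ 1} c_n Xⁿ`,
then for every `n ≥ 1`,
`c_n = ∑ (k!/(k₁!⋯k_n!)) a_k b₁^{k₁} ⋯ b_n^{k_n}`, the sum over all tuples
`(k₁, …, k_n)` of nonnegative integers with `k₁ + 2k₂ + ⋯ + n·k_n = n`, where
`k = k₁ + ⋯ + k_n`. Here a tuple is encoded as `k : Fin n → ℕ`, with `k i` playing the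
role of `k_{i+1}`, and `k!/(k₁!⋯k_n!)` is the multinomial coefficient. -/
theorem statement12 {R : Type*} [CommRing R] (f g : PowerSeries R)
    (hf : constantCoeff f = 0) (hg : constantCoeff g = 0) :
    ∀ n : ℕ, 1 ≤ n →
      coeff n (f.subst' g) =
        ∑ᶠ k ∈ {k : Fin n → ℕ | ∑ i, (i.1 + 1) * k i = n},
          ((Nat.multinomial Finset.univ k : R) * coeff (∑ i, k i) f *
            ∏ i, (coeff (i.1 + 1) g) ^ k i) := by
  intro n hn
  classical
  set b : Fin n → R := fun i => coeff (i.1 + 1) g with hb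
  set g' : PowerSeries R := ∑ i : Fin n, C (b i) * X ^ (i.1 + 1) with hg'
  -- coefficients of `g'` agree with those of `g` up to degree `n`
  have hcoeff : ∀ m ≤ n, coeff m g' = coeff m g := by
    intro m hm
    rw [hg', map_sum]
    simp only [coeff_C_mul, coeff_X_pow]
    rcases Nat.eq_zero_or_pos m with rfl | hm1
    · simp [hg, coeff_zero_eq_constantCoeff]
    · rw [Finset.sum_eq_single (⟨m - 1, by omega⟩ : Fin n)]
      · simp only [Fin.val_mk]
        rw [if_pos (by omega), mul_one]
        show coeff (m - 1 + 1) g = coeff m g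
        rw [Nat.sub_add_cancel hm1]
      · intro i _ hi
        rw [if_neg, mul_zero]
        intro h
        apply hi
        ext
        simp only [Fin.val_mk]
        omega
      · intro h
        exact absurd (Finset.mem_univ _) h
  -- hence coefficients of powers agree up to degree `n`
  have hpow : ∀ j : ℕ, ∀ m ≤ n, coeff m (g' ^ j) = coeff m (g ^ j) := by
    intro j
    induction j with
    | zero => intro m _; simp
    | succ j ih =>
      intro m hm
      rw [pow_succ, pow_succ, coeff_mul, coeff_mul]
      refine Finset.sum_congr rfl fun p hp => ?_
      rw [Finset.HasAntidiagonal.mem_antidiagonal] at hp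
      rw [ih p.1 (by omega), hcoeff p.2 (by omega)]
  -- multinomial expansion of `coeff n (g' ^ j)`
  have hC : ∀ j : ℕ, coeff n (g' ^ j) =
      ∑ k ∈ (Finset.piAntidiag (Finset.univ : Finset (Fin n)) j).filter
          (fun k : Fin n → ℕ => ∑ i, (i.1 + 1) * k i = n),
        (Nat.multinomial Finset.univ k : R) * ∏ i, (b i) ^ k i := by
    intro j
    rw [hg', Finset.sum_pow_eq_sum_piAntidiag, map_sum, Finset.sum_filter]
    refine Finset.sum_congr rfl fun k _ => ?_
    have hprod : ∏ i, (C (b i) * X ^ (i.1 + 1)) ^ k i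
        = C (∏ i, b i ^ k i) * X ^ (∑ i, (i.1 + 1) * k i) := by
      simp_rw [mul_pow, ← pow_mul, ← map_pow]
      rw [Finset.prod_mul_distrib, Finset.prod_pow_eq_pow_sum, ← map_prod]
    have hcast : ((Nat.multinomial Finset.univ k : ℕ) : PowerSeries R)
        = C ((Nat.multinomial Finset.univ k : ℕ) : R) := by
      exact (map_natCast C _).symm
    rw [hprod, hcast, ← mul_assoc, ← map_mul, coeff_C_mul, coeff_X_pow]
    by_cases h : ∑ i, (i.1 + 1) * k i = n
    · rw [if_pos h, if_pos h.symm, mul_one]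
    · rw [if_neg h, if_neg (fun hh => h hh.symm), mul_zero]
  -- the indexing finset
  set U : Finset (Fin n → ℕ) :=
    (Fintype.piFinset fun _ : Fin n => Finset.range (n + 1)).filter
      (fun k => ∑ i, (i.1 + 1) * k i = n) with hU
  have hbound : ∀ k : Fin n → ℕ, (∑ i, (i.1 + 1) * k i = n) → ∀ i, k i < n + 1 := by
    intro k h i
    have h1 : (i.1 + 1) * k i ≤ ∑ i, (i.1 + 1) * k i :=
      Finset.single_le_sum (f := fun i => (i.1 + 1) * k i)
        (fun _ _ => Nat.zero_le _) (Finset.mem_univ i)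
    have h2 : k i ≤ (i.1 + 1) * k i := Nat.le_mul_of_pos_left _ (Nat.succ_pos _)
    omega
  have hset : {k : Fin n → ℕ | ∑ i, (i.1 + 1) * k i = n} = ↑U := by
    ext k
    simp only [Set.mem_setOf_eq, hU, Finset.coe_filter, Finset.mem_coe, Finset.mem_filter,
      Fintype.mem_piFinset, Finset.mem_range]
    exact ⟨fun h => ⟨hbound k h, h⟩, fun h => h.2⟩
  -- fibers of the sum-of-values map
  have key : ∀ j : ℕ,
      (Finset.piAntidiag (Finset.univ : Finset (Fin n)) j).filter
          (fun k : Fin n → ℕ => ∑ i, (i.1 + 1) * k i = n)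
        = U.filter (fun k => ∑ i, k i = j) := by
    intro j
    ext k
    simp only [Finset.mem_filter, Finset.mem_piAntidiag, hU, Fintype.mem_piFinset,
      Finset.mem_range]
    constructor
    · rintro ⟨⟨hsum, -⟩, hw⟩
      exact ⟨⟨hbound k hw, hw⟩, hsum⟩
    · rintro ⟨⟨-, hw⟩, hsum⟩
      exact ⟨⟨hsum, fun i _ => Finset.mem_univ i⟩, hw⟩
  have hmaps : ∀ k ∈ U, (∑ i, k i) ∈ Finset.range (n + 1) := by
    intro k hk
    rw [hU, Finset.mem_filter] at hk
    rw [Finset.mem_range]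
    have : ∑ i, k i ≤ ∑ i, (i.1 + 1) * k i :=
      Finset.sum_le_sum fun i _ => Nat.le_mul_of_pos_left _ (Nat.succ_pos _)
    omega
  -- put everything together
  rw [hset, finsum_mem_coe_finset, PowerSeries.subst', coeff_mk]
  rw [← Finset.sum_fiberwise_of_maps_to hmaps
    (fun k => (Nat.multinomial Finset.univ k : R) * coeff (∑ i, k i) f *
      ∏ i, (coeff (i.1 + 1) g) ^ k i)]
  refine Finset.sum_congr rfl fun j _ => ?_
  rw [← hpow j n le_rfl, hC j, key j, Finset.mul_sum]
  refine Finset.sum_congr rfl fun k hk => ?_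
  rw [Finset.mem_filter] at hk
  rw [hk.2, hb]
  ring
end
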